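/- arXiv:math/0402263 — 4 statements merged into one kernel-verified Lean document; each statement's English description precedes it below -/
import Mathlib

section
/- Let X be a complete separable metric space with a Borel probability measure μ, and let D = D_{(X,μ)} be its matrix distribution. Then: (a) the north-west shift NW : (ℕ → ℕ → ℝ) → (ℕ → ℕ → ℝ), (NW r) i j = r (i+1) (j+1), preserves D and is ergodic with respect to D; (b) for every finitary permutation σ of ℕ, the map r ↦ (fun i j => r (σ i) (σ j)) preserves D, and every Borel set that is invariant under all such simultaneous permutations of rows and columns has D-measure 0 or 1. -/
open MeasureTheory TopologicalSpace

/-- `P` is the infinite product of countably many copies of `μ` (an i.i.d. sequence):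
it is a probability measure whose finite-dimensional marginals are products. -/
def IsIIDProduct {X : Type} [MeasurableSpace X] (μ : Measure X) (P : Measure (ℕ → X)) :
    Prop :=
  IsProbabilityMeasure P ∧
  ∀ (n : ℕ) (s : Fin n → Set X), (∀ i, MeasurableSet (s i)) →
    P {x | ∀ i : Fin n, x (i : ℕ) ∈ s i} = ∏ i : Fin n, μ (s i)

/-- The map sending a sequence of points of `X` to its matrix of mutual distances. -/
def distFun (X : Type) [MetricSpace X] : (ℕ → X) → (ℕ → ℕ → ℝ) :=
  fun x i j => dist (x i) (x j)

/-- The north-west shift on infinite matrices. -/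
def NWshift : (ℕ → ℕ → ℝ) → (ℕ → ℕ → ℝ) := fun r i j => r (i + 1) (j + 1)

/-- A finitary permutation of `ℕ`: it moves only finitely many elements. -/
def IsFinitary (σ : Equiv.Perm ℕ) : Prop := {x : ℕ | σ x ≠ x}.Finite

/-- Simultaneous permutation of rows and columns of a matrix. -/
def permAct (σ : Equiv.Perm ℕ) : (ℕ → ℕ → ℝ) → (ℕ → ℕ → ℝ) :=
  fun r i j => r (σ i) (σ j)

section Auxiliary

open Filter ProbabilityTheory MeasurableSpace Set
open scoped symmDiff

set_option linter.unusedSectionVars false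

variable {α : Type} [MeasurableSpace α] {μ : Measure α} [IsProbabilityMeasure μ] {P : Measure (ℕ → α)}

/-- A box cylinder set: constraints on finitely many coordinates. -/
def boxCyl (I : Finset ℕ) (t : ℕ → Set α) : Set (ℕ → α) := {x | ∀ i ∈ I, x i ∈ t i}

lemma boxCyl_measurable {I : Finset ℕ} {t : ℕ → Set α} (ht : ∀ i ∈ I, MeasurableSet (t i)) :
    MeasurableSet (boxCyl I t) := by
  have : boxCyl I t = ⋂ i ∈ I, (fun x : ℕ → α => x i) ⁻¹' t i := by
    ext x; simp [boxCyl]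
  rw [this]
  exact Finset.measurableSet_biInter I fun i hi => measurable_pi_apply i (ht i hi)

lemma IsIIDProduct.boxCyl_eq (hP : IsIIDProduct μ P) {I : Finset ℕ} {t : ℕ → Set α}
    (ht : ∀ i ∈ I, MeasurableSet (t i)) :
    P (boxCyl I t) = ∏ i ∈ I, μ (t i) := by
  classical
  set t' : ℕ → Set α := fun i => if i ∈ I then t i else Set.univ with ht'def
  have ht' : ∀ i, MeasurableSet (t' i) := by
    intro i
    by_cases h : i ∈ I
    · simpa [t', h] using ht i h
    · simp [t', h]
  set n : ℕ := I.sup id + 1 with hn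
  have hsub : ∀ i ∈ I, i < n := fun i hi => Nat.lt_succ_of_le (Finset.le_sup (f := id) hi)
  have key := hP.2 n (fun j => t' j) (fun j => ht' j)
  have hset : {x : ℕ → α | ∀ j : Fin n, x (j : ℕ) ∈ t' (j : ℕ)} = boxCyl I t := by
    ext x
    simp only [boxCyl, Set.mem_setOf_eq]
    constructor
    · intro h i hi
      have := h ⟨i, hsub i hi⟩
      simpa [t', hi] using this
    · intro h j
      by_cases hj : (j : ℕ) ∈ I
      · simpa [t', hj] using h j hj
      · simp [t', hj]
  rw [hset] at key
  rw [key]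
  have h1 : ∏ j : Fin n, μ (t' (j : ℕ)) = ∏ j ∈ Finset.range n, μ (t' j) :=
    Fin.prod_univ_eq_prod_range (fun j => μ (t' j)) n
  rw [h1]
  have h2 : ∀ j, μ (t' j) = if j ∈ I then μ (t j) else 1 := by
    intro j
    by_cases hj : j ∈ I <;> simp [t', hj]
  calc ∏ j ∈ Finset.range n, μ (t' j)
      = ∏ j ∈ Finset.range n, (if j ∈ I then μ (t j) else 1) :=
        Finset.prod_congr rfl fun j _ => h2 j
    _ = ∏ j ∈ Finset.range n ∩ I, μ (t j) := Finset.prod_ite_mem _ _ _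
    _ = ∏ i ∈ I, μ (t i) := by
        rw [Finset.inter_eq_right.mpr fun i hi => Finset.mem_range.mpr (hsub i hi)]

/-- Uniqueness of a probability measure from its values on box cylinders. -/
lemma eq_of_boxCyl {P Q : Measure (ℕ → α)} [IsProbabilityMeasure P] [IsProbabilityMeasure Q]
    (hPb : ∀ (I : Finset ℕ) (t : ℕ → Set α), (∀ i ∈ I, MeasurableSet (t i)) →
      P (boxCyl I t) = ∏ i ∈ I, μ (t i))
    (hQb : ∀ (I : Finset ℕ) (t : ℕ → Set α), (∀ i ∈ I, MeasurableSet (t i)) →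
      Q (boxCyl I t) = ∏ i ∈ I, μ (t i)) : P = Q := by
  classical
  set C : Set (Set (ℕ → α)) :=
    {A | ∃ (I : Finset ℕ) (t : ℕ → Set α), (∀ i ∈ I, MeasurableSet (t i)) ∧ A = boxCyl I t}
    with hC
  have hgen : (inferInstance : MeasurableSpace (ℕ → α)) = MeasurableSpace.generateFrom C := by
    refine le_antisymm ?_ ?_
    · refine iSup_le fun i => ?_
      rw [MeasurableSpace.comap_le_iff_le_map]
      intro t ht
      apply measurableSet_generateFrom
      refine ⟨{i}, fun _ => t, by simpa using ht, ?_⟩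
      ext x; simp [boxCyl]
    · refine MeasurableSpace.generateFrom_le ?_
      rintro A ⟨I, t, ht, rfl⟩
      exact boxCyl_measurable ht
  have hpi : IsPiSystem C := by
    rintro A ⟨I, t, ht, rfl⟩ B ⟨J, u, hu, rfl⟩ -
    refine ⟨I ∪ J,
      fun i => (if i ∈ I then t i else Set.univ) ∩ (if i ∈ J then u i else Set.univ), ?_, ?_⟩
    · intro i _
      apply MeasurableSet.inter
      · split
        · exact ht i ‹_›
        · exact MeasurableSet.univ
      · split
        · exact hu i ‹_›
        · exact MeasurableSet.univ
    · ext x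
      simp only [boxCyl, Set.mem_inter_iff, Set.mem_setOf_eq, Finset.mem_union,
        Set.mem_ite_univ_right]
      constructor
      · rintro ⟨h1, h2⟩ i _
        exact ⟨fun hi => h1 i hi, fun hi => h2 i hi⟩
      · intro h
        exact ⟨fun i hi => (h i (Or.inl hi)).1 hi, fun i hi => (h i (Or.inr hi)).2 hi⟩
  refine ext_of_generate_finite C hgen hpi ?_ (by simp)
  rintro A ⟨I, t, ht, rfl⟩
  rw [hPb I t ht, hQb I t ht]

/-- A measurable map whose preimages of box cylinders have the right product measure
pushes `P` forward to itself. -/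
lemma IsIIDProduct.map_eq (hP : IsIIDProduct μ P) {g : (ℕ → α) → (ℕ → α)} (hg : Measurable g)
    (hbox : ∀ (I : Finset ℕ) (t : ℕ → Set α), (∀ i ∈ I, MeasurableSet (t i)) →
      P (g ⁻¹' boxCyl I t) = ∏ i ∈ I, μ (t i)) :
    Measure.map g P = P := by
  haveI := hP.1
  haveI : IsProbabilityMeasure (Measure.map g P) := Measure.isProbabilityMeasure_map hg.aemeasurable
  refine eq_of_boxCyl (μ := μ) ?_ (fun I t ht => hP.boxCyl_eq ht)
  intro I t ht
  rw [Measure.map_apply hg (boxCyl_measurable ht)]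
  exact hbox I t ht

/-- The one-sided shift on sequences. -/
def seqShift (α : Type) : (ℕ → α) → (ℕ → α) := fun x i => x (i + 1)

lemma measurable_seqShift : Measurable (seqShift α) :=
  measurable_pi_lambda _ fun i => measurable_pi_apply (i + 1)

lemma IsIIDProduct.shift_preserving (hP : IsIIDProduct μ P) :
    MeasurePreserving (seqShift α) P P := by
  refine ⟨measurable_seqShift, hP.map_eq measurable_seqShift ?_⟩
  intro I t ht
  classical
  have hpre : seqShift α ⁻¹' boxCyl I t
      = boxCyl (I.image (· + 1)) (fun j => t (j - 1)) := by
    ext x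
    simp only [boxCyl, Set.mem_preimage, Set.mem_setOf_eq, Finset.mem_image, seqShift]
    constructor
    · rintro h j ⟨i, hi, rfl⟩
      simpa using h i hi
    · intro h i hi
      simpa using h (i + 1) ⟨i, hi, rfl⟩
  rw [hpre, (hP.boxCyl_eq (I := I.image (· + 1)) (t := fun j => t (j - 1)) ?_),
    Finset.prod_image (fun a _ b _ h => by omega)]
  · simp
  · rintro j hj
    rw [Finset.mem_image] at hj
    obtain ⟨i, hi, rfl⟩ := hj
    simpa using ht i hi

/-- The action of a permutation of indices on sequences. -/
def seqPerm (α : Type) (σ : Equiv.Perm ℕ) : (ℕ → α) → (ℕ → α) := fun x i => x (σ i)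

lemma measurable_seqPerm (σ : Equiv.Perm ℕ) : Measurable (seqPerm α σ) :=
  measurable_pi_lambda _ fun i => measurable_pi_apply (σ i)

lemma IsIIDProduct.perm_preserving (hP : IsIIDProduct μ P) (σ : Equiv.Perm ℕ) :
    MeasurePreserving (seqPerm α σ) P P := by
  refine ⟨measurable_seqPerm σ, hP.map_eq (measurable_seqPerm σ) ?_⟩
  intro I t ht
  classical
  have hpre : seqPerm α σ ⁻¹' boxCyl I t
      = boxCyl (I.image σ) (fun j => t (σ.symm j)) := by
    ext x
    simp only [boxCyl, Set.mem_preimage, Set.mem_setOf_eq, Finset.mem_image, seqPerm]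
    constructor
    · rintro h j ⟨i, hi, rfl⟩
      simpa using h i hi
    · intro h i hi
      simpa using h (σ i) ⟨i, hi, rfl⟩
  rw [hpre, (hP.boxCyl_eq (I := I.image σ) (t := fun j => t (σ.symm j)) ?_),
    Finset.prod_image (fun a _ b _ h => σ.injective h)]
  · simp
  · rintro j hj
    rw [Finset.mem_image] at hj
    obtain ⟨i, hi, rfl⟩ := hj
    simpa using ht i hi

/-- The coordinates of an i.i.d. sequence are independent. -/
lemma IsIIDProduct.iIndep_coords (hP : IsIIDProduct μ P) :
    iIndep (fun i => MeasurableSpace.comap (fun x : ℕ → α => x i) inferInstance) P := by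
  classical
  rw [iIndep_iff]
  intro s f H
  choose! t htm hft using fun i (hi : i ∈ s) => H i hi
  have h1 : ⋂ i ∈ s, f i = boxCyl s t := by
    ext x
    simp only [boxCyl, Set.mem_iInter, Set.mem_setOf_eq]
    refine forall₂_congr fun i hi => ?_
    rw [← hft i hi]; rfl
  have h2 : ∀ i ∈ s, P (f i) = μ (t i) := by
    intro i hi
    rw [← hft i hi]
    have : (fun x : ℕ → α => x i) ⁻¹' t i = boxCyl {i} t := by
      ext x; simp [boxCyl]
    rw [this, hP.boxCyl_eq (by simpa using htm i hi)]
    simp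
  rw [h1, hP.boxCyl_eq htm]
  exact (Finset.prod_congr rfl h2).symm

lemma seqShift_iterate_apply : ∀ (n : ℕ) (x : ℕ → α) (i : ℕ),
    (seqShift α)^[n] x i = x (i + n) := by
  intro n
  induction n with
  | zero => simp
  | succ n ih =>
      intro x i
      rw [Function.iterate_succ_apply, ih]
      simp only [seqShift]
      rw [Nat.add_assoc]

/-- Kolmogorov 0-1 law: shift invariant events are trivial. -/
lemma IsIIDProduct.zero_or_one_of_shift_invariant (hP : IsIIDProduct μ P)
    {T : Set (ℕ → α)} (hT : MeasurableSet T) (hinv : seqShift α ⁻¹' T = T) :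
    P T = 0 ∨ P T = 1 := by
  classical
  set m : ℕ → MeasurableSpace (ℕ → α) :=
    fun i => MeasurableSpace.comap (fun x : ℕ → α => x i) inferInstance with hm
  have h_le : ∀ i, m i ≤ (inferInstance : MeasurableSpace (ℕ → α)) :=
    fun i => measurable_iff_comap_le.mp (measurable_pi_apply i)
  have hiter : ∀ n, (seqShift α)^[n] ⁻¹' T = T := by
    intro n
    induction n with
    | zero => simp
    | succ n ih =>
        rw [Function.iterate_succ', Set.preimage_comp, hinv, ih]
  have hkey : ∀ n : ℕ, MeasurableSet[⨆ i, ⨆ (_ : n ≤ i), m i] T := by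
    intro n
    have hmeas : Measurable[⨆ i, ⨆ (_ : n ≤ i), m i, MeasurableSpace.pi]
        ((seqShift α)^[n]) := by
      rw [measurable_iff_comap_le, MeasurableSpace.pi, MeasurableSpace.comap_iSup]
      refine iSup_le fun j => ?_
      rw [MeasurableSpace.comap_comp]
      have heq : ((fun b : ℕ → α => b j) ∘ (seqShift α)^[n]) = fun x : ℕ → α => x (j + n) :=
        funext fun x => seqShift_iterate_apply n x j
      rw [heq]
      exact le_iSup₂ (f := fun i (_ : n ≤ i) => m i) (j + n) (Nat.le_add_left n j)
    have := hmeas hT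
    rwa [hiter n] at this
  have htail : MeasurableSet[limsup m atTop] T := by
    rw [limsup_eq, MeasurableSpace.measurableSet_sInf]
    intro m' hm'
    simp only [Set.mem_setOf_eq, eventually_atTop] at hm'
    obtain ⟨n, hn⟩ := hm'
    exact (iSup₂_le fun i hi => hn i hi) T (hkey n)
  exact measure_zero_or_one_of_measurableSet_limsup_atTop h_le hP.iIndep_coords htail

/-- The permutation of `ℕ` swapping `[0,n)` and `[n,2n)`. -/
def swapPerm (n : ℕ) : Equiv.Perm ℕ where
  toFun i := if i < n then i + n else if i < 2 * n then i - n else i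
  invFun i := if i < n then i + n else if i < 2 * n then i - n else i
  left_inv i := by simp only; split_ifs <;> omega
  right_inv i := by simp only; split_ifs <;> omega

lemma swapPerm_finitary (n : ℕ) : IsFinitary (swapPerm n) := by
  apply Set.Finite.subset (Set.finite_Iio (2 * n))
  intro x hx
  simp only [Set.mem_setOf_eq, swapPerm, Equiv.coe_fn_mk] at hx
  simp only [Set.mem_Iio]
  by_contra h
  push_neg at h
  rw [if_neg (by omega), if_neg (by omega)] at hx
  exact hx rfl

lemma swapPerm_lt {n i : ℕ} (hi : i < n) : swapPerm n i = i + n := by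
  simp [swapPerm, hi]

/-- Hewitt-Savage 0-1 law: events invariant under all finitary permutations are trivial. -/
lemma IsIIDProduct.zero_or_one_of_perm_invariant (hP : IsIIDProduct μ P)
    {T : Set (ℕ → α)} (hT : MeasurableSet T)
    (hinv : ∀ σ : Equiv.Perm ℕ, IsFinitary σ → seqPerm α σ ⁻¹' T = T) :
    P T = 0 ∨ P T = 1 := by
  classical
  haveI := hP.1
  set a : ℝ := (P T).toReal with ha
  have main : ∀ ε : ℝ, 0 < ε → |a - a * a| ≤ 4 * ε := by
    intro ε hε
    have halg : IsSetAlgebra (measurableCylinders fun _ : ℕ => α) :=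
      ⟨empty_mem_measurableCylinders _, fun _ h => compl_mem_measurableCylinders h,
        fun _ _ h h' => union_mem_measurableCylinders h h'⟩
    have hdense := Measure.MeasureDense.of_generateFrom_isSetAlgebra_finite (μ := P) halg
      generateFrom_measurableCylinders.symm
    obtain ⟨A, hAmem, hAε⟩ := hdense.approx T hT (measure_ne_top P T) ε hε
    obtain ⟨s, B, hB, rfl⟩ := (mem_measurableCylinders _).mp hAmem
    set A : Set (ℕ → α) := cylinder s B with hA
    have hAms : MeasurableSet A := hB.cylinder
    set n : ℕ := s.sup id + 1 with hn
    have hsn : ∀ i ∈ s, i < n := fun i hi => Nat.lt_succ_of_le (Finset.le_sup (f := id) hi)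
    set σ : Equiv.Perm ℕ := swapPerm n with hσ
    set g : (ℕ → α) → (ℕ → α) := seqPerm α σ with hg
    have hgP : MeasurePreserving g P P := hP.perm_preserving σ
    have hgT : g ⁻¹' T = T := hinv σ (swapPerm_finitary n)
    have hA1 : MeasurableSet[cylinderEvents (↑s : Set ℕ)] A := by
      have hres : Measurable[cylinderEvents (↑s : Set ℕ), MeasurableSpace.pi]
          (fun f : ℕ → α => fun i : s => f (i : ℕ)) := by
        rw [measurable_iff_comap_le, MeasurableSpace.pi, MeasurableSpace.comap_iSup]
        refine iSup_le fun j => ?_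
        rw [MeasurableSpace.comap_comp]
        exact measurable_iff_comap_le.mp
          (measurable_cylinderEvent_apply (Finset.mem_coe.mpr j.2))
      exact hres hB
    have hA2 : MeasurableSet[cylinderEvents (σ '' (↑s : Set ℕ))] (g ⁻¹' A) := by
      have hres : Measurable[cylinderEvents (σ '' (↑s : Set ℕ)), MeasurableSpace.pi]
          (fun f : ℕ → α => fun i : s => f (σ (i : ℕ))) := by
        rw [measurable_iff_comap_le, MeasurableSpace.pi, MeasurableSpace.comap_iSup]
        refine iSup_le fun j => ?_
        rw [MeasurableSpace.comap_comp]
        exact measurable_iff_comap_le.mp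
          (measurable_cylinderEvent_apply (Set.mem_image_of_mem σ (Finset.mem_coe.mpr j.2)))
      exact hres hB
    have hdisj : Disjoint (↑s : Set ℕ) (σ '' (↑s : Set ℕ)) := by
      rw [Set.disjoint_left]
      intro x hx hmem
      obtain ⟨y, hy, hyx⟩ := hmem
      have h1 : x < n := hsn x (Finset.mem_coe.mp hx)
      have h2 : y < n := hsn y (Finset.mem_coe.mp hy)
      have h3 : σ y = y + n := swapPerm_lt h2
      omega
    have hind : Indep (cylinderEvents (↑s : Set ℕ)) (cylinderEvents (σ '' (↑s : Set ℕ))) P := by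
      have h_le : ∀ i : ℕ,
          MeasurableSpace.comap (fun x : ℕ → α => x i) inferInstance
            ≤ (inferInstance : MeasurableSpace (ℕ → α)) :=
        fun i => measurable_iff_comap_le.mp (measurable_pi_apply i)
      exact indep_iSup_of_disjoint h_le hP.iIndep_coords hdisj
    have hmul : P (A ∩ (g ⁻¹' A)) = P A * P (g ⁻¹' A) :=
      (hind.indepSet_of_measurableSet hA1 hA2).measure_inter_eq_mul
    set b : ℝ := (P A).toReal with hb
    set c : ℝ := (P (g ⁻¹' A)).toReal with hc
    have hTA : ((P (T ∆ A)).toReal) < ε := by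
      rw [← ENNReal.toReal_ofReal hε.le]
      exact ENNReal.toReal_strict_mono ENNReal.ofReal_ne_top hAε
    have hTgA : (P (T ∆ (g ⁻¹' A))).toReal < ε := by
      have : T ∆ (g ⁻¹' A) = g ⁻¹' (T ∆ A) := by rw [Set.preimage_symmDiff, hgT]
      rw [this, hgP.measure_preimage (hT.symmDiff hAms).nullMeasurableSet]
      exact hTA
    have e1 : |a - b| ≤ (P (T ∆ A)).toReal :=
      abs_measureReal_sub_le_measureReal_symmDiff hT.nullMeasurableSet hAms.nullMeasurableSet
    have e2 : |a - c| ≤ (P (T ∆ (g ⁻¹' A))).toReal :=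
      abs_measureReal_sub_le_measureReal_symmDiff hT.nullMeasurableSet
        (hgP.measurable hAms).nullMeasurableSet
    have hsub : T ∆ (A ∩ (g ⁻¹' A)) ⊆ (T ∆ A) ∪ (T ∆ (g ⁻¹' A)) := by
      intro x hx
      simp only [Set.mem_symmDiff, Set.mem_union, Set.mem_inter_iff] at hx ⊢
      tauto
    have e3 : |a - b * c| ≤ 2 * ε := by
      have h1 : |a - (P (A ∩ (g ⁻¹' A))).toReal| ≤ (P (T ∆ (A ∩ (g ⁻¹' A)))).toReal :=
        abs_measureReal_sub_le_measureReal_symmDiff hT.nullMeasurableSet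
          (hAms.inter (hgP.measurable hAms)).nullMeasurableSet
      have h2 : (P (T ∆ (A ∩ (g ⁻¹' A)))).toReal
          ≤ (P (T ∆ A)).toReal + (P (T ∆ (g ⁻¹' A))).toReal := by
        rw [← ENNReal.toReal_add (measure_ne_top _ _) (measure_ne_top _ _)]
        refine ENNReal.toReal_mono
          (by exact ENNReal.add_ne_top.mpr ⟨measure_ne_top _ _, measure_ne_top _ _⟩) ?_
        exact le_trans (measure_mono hsub) (measure_union_le _ _)
      have h3 : (P (A ∩ (g ⁻¹' A))).toReal = b * c := by
        rw [hmul, ENNReal.toReal_mul]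
      rw [h3] at h1
      linarith
    have hb1 : 0 ≤ b ∧ b ≤ 1 :=
      ⟨ENNReal.toReal_nonneg, by
        rw [hb]; exact ENNReal.toReal_le_of_le_ofReal one_pos.le (by simpa using prob_le_one)⟩
    have hc1 : 0 ≤ c ∧ c ≤ 1 :=
      ⟨ENNReal.toReal_nonneg, by
        rw [hc]; exact ENNReal.toReal_le_of_le_ofReal one_pos.le (by simpa using prob_le_one)⟩
    have ha1 : 0 ≤ a ∧ a ≤ 1 :=
      ⟨ENNReal.toReal_nonneg, by
        rw [ha]; exact ENNReal.toReal_le_of_le_ofReal one_pos.le (by simpa using prob_le_one)⟩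
    have t1 : |b * c - a * c| ≤ ε := by
      rw [← sub_mul, abs_mul]
      calc |b - a| * |c| ≤ ε * 1 := by
            apply mul_le_mul _ _ (abs_nonneg c) hε.le
            · rw [abs_sub_comm]; linarith
            · rw [abs_of_nonneg hc1.1]; exact hc1.2
        _ = ε := mul_one ε
    have t2 : |a * c - a * a| ≤ ε := by
      rw [← mul_sub, abs_mul]
      calc |a| * |c - a| ≤ 1 * ε := by
            apply mul_le_mul _ _ (abs_nonneg _) one_pos.le
            · rw [abs_of_nonneg ha1.1]; exact ha1.2
            · rw [abs_sub_comm]; linarith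
        _ = ε := one_mul ε
    calc |a - a * a| ≤ |a - a * c| + |a * c - a * a| := abs_sub_le _ _ _
      _ ≤ (|a - b * c| + |b * c - a * c|) + |a * c - a * a| := by
          have := abs_sub_le a (b * c) (a * c)
          linarith
      _ ≤ 4 * ε := by linarith
  have haa : a = a * a := by
    by_contra h
    have h0 : 0 < |a - a * a| := abs_pos.mpr (sub_ne_zero.mpr h)
    have := main (|a - a * a| / 8) (by linarith)
    linarith
  have hPT : P T ≠ ⊤ := measure_ne_top _ _
  rcases mul_eq_zero.mp (show a * (1 - a) = 0 by nlinarith) with h0 | h1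
  · exact Or.inl (((ENNReal.toReal_eq_zero_iff _).mp h0).resolve_right hPT)
  · refine Or.inr ?_
    have : a = 1 := by linarith
    rw [ha] at this
    exact (ENNReal.toReal_eq_one_iff _).mp this

end Auxiliary

open Filter ProbabilityTheory

/-- The matrix distribution `D` of a metric triple `(X, ρ, μ)` (the pushforward under
`distFun` of the i.i.d. product of `μ`) is: (a) invariant and ergodic under the
north-west shift; (b) invariant under every simultaneous finitary permutation of rows
and columns, and every invariant Borel set has `D`-measure `0` or `1`. -/
theorem matrixDistribution_invariant_ergodic (X : Type) [MetricSpace X]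
    [CompleteSpace X] [SeparableSpace X] [MeasurableSpace X] [BorelSpace X]
    (μ : Measure X) [IsProbabilityMeasure μ]
    (P : Measure (ℕ → X)) (hP : IsIIDProduct μ P) :
    Ergodic NWshift (Measure.map (distFun X) P) ∧
    (∀ σ : Equiv.Perm ℕ, IsFinitary σ →
      MeasurePreserving (permAct σ) (Measure.map (distFun X) P)
        (Measure.map (distFun X) P)) ∧
    (∀ S : Set (ℕ → ℕ → ℝ), MeasurableSet S →
      (∀ σ : Equiv.Perm ℕ, IsFinitary σ → permAct σ ⁻¹' S = S) →
      Measure.map (distFun X) P S = 0 ∨ Measure.map (distFun X) P S = 1) := by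
  haveI := hP.1
  haveI : SecondCountableTopology X := UniformSpace.secondCountable_of_separable X
  have hdm : Measurable (distFun X) :=
    measurable_pi_lambda _ fun i => measurable_pi_lambda _ fun j =>
      (measurable_pi_apply i).dist (measurable_pi_apply j)
  have hNW : Measurable NWshift :=
    measurable_pi_lambda _ fun i => measurable_pi_lambda _ fun j =>
      (measurable_pi_apply (j + 1)).comp (measurable_pi_apply (i + 1))
  have hpermM : ∀ σ : Equiv.Perm ℕ, Measurable (permAct σ) := fun σ =>
    measurable_pi_lambda _ fun i => measurable_pi_lambda _ fun j =>
      (measurable_pi_apply (σ j)).comp (measurable_pi_apply (σ i))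
  haveI : IsProbabilityMeasure (Measure.map (distFun X) P) :=
    Measure.isProbabilityMeasure_map hdm.aemeasurable
  have hconj : NWshift ∘ distFun X = distFun X ∘ seqShift X := rfl
  have hconjσ : ∀ σ : Equiv.Perm ℕ, permAct σ ∘ distFun X = distFun X ∘ seqPerm X σ :=
    fun σ => rfl
  have mpNW : MeasurePreserving NWshift (Measure.map (distFun X) P)
      (Measure.map (distFun X) P) := by
    refine ⟨hNW, ?_⟩
    rw [Measure.map_map hNW hdm, hconj, ← Measure.map_map hdm measurable_seqShift,
      hP.shift_preserving.map_eq]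
  refine ⟨⟨mpNW, ⟨fun S hS hSinv => ?_⟩⟩, fun σ hσ => ?_, fun S hS hSinv => ?_⟩
  · -- ergodicity of NWshift
    have hTinv : seqShift X ⁻¹' (distFun X ⁻¹' S) = distFun X ⁻¹' S := by
      rw [show seqShift X ⁻¹' (distFun X ⁻¹' S) = distFun X ⁻¹' (NWshift ⁻¹' S) from rfl,
        hSinv]
    have hDS : Measure.map (distFun X) P S = P (distFun X ⁻¹' S) := Measure.map_apply hdm hS
    rcases hP.zero_or_one_of_shift_invariant (hdm hS) hTinv with h | h
    · refine Filter.eventuallyConst_set'.mpr (Or.inl ?_)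
      rw [MeasureTheory.ae_eq_empty, hDS]
      exact h
    · refine Filter.eventuallyConst_set'.mpr (Or.inr ?_)
      rw [MeasureTheory.ae_eq_univ]
      rw [prob_compl_eq_zero_iff hS, hDS]
      exact h
  · -- invariance under finitary permutations
    refine ⟨hpermM σ, ?_⟩
    rw [Measure.map_map (hpermM σ) hdm, hconjσ σ, ← Measure.map_map hdm (measurable_seqPerm σ),
      (hP.perm_preserving σ).map_eq]
  · -- Hewitt-Savage for the matrix distribution
    rw [Measure.map_apply hdm hS]
    refine hP.zero_or_one_of_perm_invariant (hdm hS) fun σ hσfin => ?_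
    rw [show seqPerm X σ ⁻¹' (distFun X ⁻¹' S) = distFun X ⁻¹' (permAct σ ⁻¹' S) from rfl,
      hSinv σ hσfin]
end

section
/- (Reconstruction theorem.) Let X₁, X₂ be complete separable metric spaces and let μ₁, μ₂ be Borel probability measures on X₁, X₂ respectively, each nondegenerate (every nonempty open set has positive measure, i.e., the measure has full support). Then the matrix distributions coincide, D_{(X₁,μ₁)} = D_{(X₂,μ₂)}, if and only if there exists a distance-preserving bijection V : X₁ → X₂ with pushforward V_*μ₁ = μ₂. -/
open MeasureTheory TopologicalSpace

open Filter Set Topology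
open scoped ENNReal NNReal

namespace Recon

variable {X : Type} [MeasurableSpace X]

/-- box cylinders -/
def boxes (X : Type) [MeasurableSpace X] : Set (Set (ℕ → X)) :=
  {A | ∃ (n : ℕ) (s : Fin n → Set X), (∀ i, MeasurableSet (s i)) ∧
    A = {x | ∀ i : Fin n, x (i : ℕ) ∈ s i}}

lemma univ_mem_boxes : (Set.univ : Set (ℕ → X)) ∈ boxes X := by
  refine ⟨0, fun i => i.elim0, fun i => i.elim0, ?_⟩
  ext x; simp

lemma measurableSet_of_mem_boxes {A : Set (ℕ → X)} (hA : A ∈ boxes X) : MeasurableSet A := by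
  obtain ⟨n, s, hs, rfl⟩ := hA
  have : {x : ℕ → X | ∀ i : Fin n, x (i : ℕ) ∈ s i} = ⋂ i : Fin n, (fun x => x (i : ℕ)) ⁻¹' s i := by
    ext x; simp
  rw [this]
  exact MeasurableSet.iInter fun i => (measurable_pi_apply _) (hs i)

lemma isPiSystem_boxes : IsPiSystem (boxes X) := by
  rintro A ⟨n, s, hs, rfl⟩ B ⟨m, t, ht, rfl⟩ -
  refine ⟨max n m, fun i => (if h : (i : ℕ) < n then s ⟨i, h⟩ else Set.univ) ∩
      (if h : (i : ℕ) < m then t ⟨i, h⟩ else Set.univ), ?_, ?_⟩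
  · intro i
    refine MeasurableSet.inter ?_ ?_ <;> · split <;> simp [hs, ht]
  · ext x
    simp only [Set.mem_inter_iff, Set.mem_setOf_eq]
    constructor
    · rintro ⟨h1, h2⟩ i
      constructor
      · split
        · exact h1 ⟨i, ‹_›⟩
        · trivial
      · split
        · exact h2 ⟨i, ‹_›⟩
        · trivial
    · intro h
      constructor
      · intro i
        have := (h ⟨i, lt_of_lt_of_le i.2 (le_max_left n m)⟩).1
        simpa [i.2] using this
      · intro i
        have := (h ⟨i, lt_of_lt_of_le i.2 (le_max_right n m)⟩).2
        simpa [i.2] using this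

lemma generateFrom_boxes :
    (MeasurableSpace.pi : MeasurableSpace (ℕ → X)) = MeasurableSpace.generateFrom (boxes X) := by
  refine le_antisymm ?_ ?_
  · refine iSup_le fun i => ?_
    rw [← measurable_iff_comap_le]
    intro s hs
    refine MeasurableSpace.measurableSet_generateFrom ?_
    refine ⟨i + 1, fun k => if (k : ℕ) = i then s else Set.univ, ?_, ?_⟩
    · intro k; by_cases h' : (k : ℕ) = i <;> simp [h', hs]
    · ext x
      simp only [Set.mem_preimage, Set.mem_setOf_eq]
      constructor
      · intro h k
        obtain ⟨kv, hkv⟩ := k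
        by_cases h' : kv = i
        · subst h'; simpa using h
        · simp [h']
      · intro h
        have := h ⟨i, Nat.lt_succ_self i⟩
        simpa using this
  · exact MeasurableSpace.generateFrom_le fun A hA => measurableSet_of_mem_boxes hA

lemma isCountablySpanning_boxes : IsCountablySpanning (boxes X) :=
  ⟨fun _ => Set.univ, fun _ => univ_mem_boxes, Set.iUnion_const _⟩

variable {μ : Measure X} {P : Measure (ℕ → X)}

/-- uniqueness of the iid product -/
lemma iid_unique (h : IsIIDProduct μ P) {P' : Measure (ℕ → X)} (h' : IsIIDProduct μ P') :
    P = P' := by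
  haveI := h.1
  refine ext_of_generate_finite (boxes X) generateFrom_boxes isPiSystem_boxes ?_ ?_
  · rintro A ⟨n, s, hs, rfl⟩
    rw [h.2 n s hs, h'.2 n s hs]
  · haveI := h'.1
    simp [measure_univ]

/-- box formula along an injective finite index map -/
lemma iid_box_inj (h : IsIIDProduct μ P) {n : ℕ} (ι : Fin n → ℕ) (hι : Function.Injective ι)
    (s : Fin n → Set X) (hs : ∀ i, MeasurableSet (s i)) :
    P {x | ∀ i : Fin n, x (ι i) ∈ s i} = ∏ i : Fin n, μ (s i) := by
  classical
  set N : ℕ := (Finset.univ : Finset (Fin n)).sup ι + 1 with hN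
  have hlt : ∀ i : Fin n, ι i < N := fun i =>
    Nat.lt_succ_of_le (Finset.le_sup (Finset.mem_univ i))
  set t : Fin N → Set X := fun j => if hj : ∃ i, ι i = (j : ℕ) then s hj.choose else Set.univ
    with ht_def
  have ht : ∀ i : Fin n, t ⟨ι i, hlt i⟩ = s i := by
    intro i
    have hj : ∃ i' : Fin n, ι i' = ((⟨ι i, hlt i⟩ : Fin N) : ℕ) := ⟨i, rfl⟩
    have : hj.choose = i := hι hj.choose_spec
    simp only [ht_def, dif_pos hj, this]
  have hmt : ∀ j, MeasurableSet (t j) := by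
    intro j
    by_cases hj : ∃ i, ι i = (j : ℕ)
    · simp only [ht_def, dif_pos hj]; exact hs _
    · simp only [ht_def, dif_neg hj]; exact MeasurableSet.univ
  have hset : {x : ℕ → X | ∀ j : Fin N, x (j : ℕ) ∈ t j} = {x | ∀ i : Fin n, x (ι i) ∈ s i} := by
    ext x
    simp only [Set.mem_setOf_eq]
    constructor
    · intro hx i
      have := hx ⟨ι i, hlt i⟩
      rwa [ht i] at this
    · intro hx j
      by_cases hj : ∃ i, ι i = (j : ℕ)
      · simp only [ht_def, dif_pos hj]
        have : x (j : ℕ) = x (ι hj.choose) := by rw [hj.choose_spec]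
        rw [this]
        exact hx _
      · simp only [ht_def, dif_neg hj]; trivial
  have hprod : ∏ j : Fin N, μ (t j) = ∏ i : Fin n, μ (s i) := by
    set F : Finset (Fin N) := Finset.univ.image (fun i : Fin n => (⟨ι i, hlt i⟩ : Fin N)) with hF
    have h1 : ∏ j : Fin N, μ (t j) = ∏ j ∈ F, μ (t j) := by
      refine (Finset.prod_subset (Finset.subset_univ F) ?_).symm
      intro j _ hj
      have hne : ¬ ∃ i, ι i = (j : ℕ) := by
        rintro ⟨i, hi⟩
        exact hj (Finset.mem_image.2 ⟨i, Finset.mem_univ i, by ext; simp [hi]⟩)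
      haveI : IsProbabilityMeasure μ := by
        constructor
        haveI := h.1
        have h0 := h.2 1 (fun _ => Set.univ) (fun _ => MeasurableSet.univ)
        simp at h0
        · exact h0.symm
      simp only [ht_def, dif_neg hne]
      exact measure_univ
    have h2 : ∏ j ∈ F, μ (t j) = ∏ i : Fin n, μ (t ⟨ι i, hlt i⟩) := by
      rw [hF]
      refine Finset.prod_image ?_
      intro a _ b _ hab
      exact hι (by simpa [Fin.ext_iff] using hab)
    rw [h1, h2]
    exact Finset.prod_congr rfl fun i _ => by rw [ht i]
  rw [← hset, h.2 N t hmt, hprod]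

/-- single coordinate distribution -/
lemma iid_map_eval (h : IsIIDProduct μ P) (i : ℕ) :
    Measure.map (fun x : ℕ → X => x i) P = μ := by
  ext s hs
  rw [Measure.map_apply (measurable_pi_apply i) hs]
  have := iid_box_inj h (fun _ : Fin 1 => i) (fun _ _ _ => Subsingleton.elim _ _)
    (fun _ => s) (fun _ => hs)
  simp only [Finset.prod_const, Finset.card_univ, Fintype.card_fin, pow_one] at this
  have hset : {x : ℕ → X | ∀ _ : Fin 1, x i ∈ s} = (fun x : ℕ → X => x i) ⁻¹' s := by
    ext x; simp
  rw [← hset]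
  rw [this]

/-- combined two-block box formula -/
lemma iid_box_two (h : IsIIDProduct μ P) {n m : ℕ} (α : Fin n → ℕ) (β : Fin m → ℕ)
    (hα : Function.Injective α) (hβ : Function.Injective β)
    (hdisj : ∀ i j, α i ≠ β j)
    (s : Fin n → Set X) (t : Fin m → Set X)
    (hs : ∀ i, MeasurableSet (s i)) (ht : ∀ j, MeasurableSet (t j)) :
    P {x | (∀ i : Fin n, x (α i) ∈ s i) ∧ ∀ j : Fin m, x (β j) ∈ t j}
      = (∏ i : Fin n, μ (s i)) * ∏ j : Fin m, μ (t j) := by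
  have hinj : Function.Injective (Fin.append α β) := by
    intro a b hab
    induction a using Fin.addCases with
    | left i =>
      induction b using Fin.addCases with
      | left j =>
        rw [Fin.append_left, Fin.append_left] at hab
        rw [hα hab]
      | right j =>
        rw [Fin.append_left, Fin.append_right] at hab
        exact absurd hab (hdisj _ _)
    | right i =>
      induction b using Fin.addCases with
      | left j =>
        rw [Fin.append_right, Fin.append_left] at hab
        exact absurd hab.symm (hdisj _ _)
      | right j =>
        rw [Fin.append_right, Fin.append_right] at hab
        rw [hβ hab]
  have key := iid_box_inj h (Fin.append α β) hinj (Fin.append s t) (by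
    intro k
    refine Fin.addCases (fun i => ?_) (fun j => ?_) k
    · rw [Fin.append_left]; exact hs i
    · rw [Fin.append_right]; exact ht j)
  have hset : {x : ℕ → X | ∀ k : Fin (n + m), x (Fin.append α β k) ∈ Fin.append s t k}
      = {x | (∀ i : Fin n, x (α i) ∈ s i) ∧ ∀ j : Fin m, x (β j) ∈ t j} := by
    ext x
    simp only [Set.mem_setOf_eq]
    constructor
    · intro hx
      constructor
      · intro i
        have := hx (Fin.castAdd m i)
        rwa [Fin.append_left, Fin.append_left] at this
      · intro j
        have := hx (Fin.natAdd n j)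
        rwa [Fin.append_right, Fin.append_right] at this
    · rintro ⟨h1, h2⟩ k
      refine Fin.addCases (fun i => ?_) (fun j => ?_) k
      · rw [Fin.append_left, Fin.append_left]; exact h1 i
      · rw [Fin.append_right, Fin.append_right]; exact h2 j
  have hprod : ∏ k : Fin (n + m), μ (Fin.append s t k)
      = (∏ i : Fin n, μ (s i)) * ∏ j : Fin m, μ (t j) := by
    rw [Fin.prod_univ_add]
    congr 1
    · exact Finset.prod_congr rfl fun i _ => by rw [Fin.append_left]
    · exact Finset.prod_congr rfl fun j _ => by rw [Fin.append_right]
  rw [← hset, key, hprod]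

/-- an injective subsequence of an iid sequence is iid -/
lemma iid_comp (h : IsIIDProduct μ P) (e : ℕ → ℕ) (he : Function.Injective e) :
    IsIIDProduct μ (Measure.map (fun x (k : ℕ) => x (e k)) P) := by
  have hmeas : Measurable (fun x : ℕ → X => fun k : ℕ => x (e k)) :=
    measurable_pi_lambda _ fun k => measurable_pi_apply _
  haveI := h.1
  refine ⟨Measure.isProbabilityMeasure_map hmeas.aemeasurable, ?_⟩
  intro n s hs
  rw [Measure.map_apply hmeas (measurableSet_of_mem_boxes ⟨n, s, hs, rfl⟩)]
  have : (fun x : ℕ → X => fun k : ℕ => x (e k)) ⁻¹' {x | ∀ i : Fin n, x (i : ℕ) ∈ s i}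
      = {x | ∀ i : Fin n, x (e (i : ℕ)) ∈ s i} := rfl
  rw [this]
  exact iid_box_inj h (fun i : Fin n => e (i : ℕ)) (fun a b hab => Fin.ext (he hab)) s hs

/-- splitting into two disjoint injective subsequences gives independent components -/
lemma iid_split (h : IsIIDProduct μ P) (e₁ e₂ : ℕ → ℕ)
    (he₁ : Function.Injective e₁) (he₂ : Function.Injective e₂)
    (hdisj : ∀ i j, e₁ i ≠ e₂ j) :
    Measure.map (fun x : ℕ → X => (fun k : ℕ => x (e₁ k), fun k : ℕ => x (e₂ k))) P
      = (Measure.map (fun x (k : ℕ) => x (e₁ k)) P).prod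
        (Measure.map (fun x (k : ℕ) => x (e₂ k)) P) := by
  classical
  haveI := h.1
  have hm1 : Measurable (fun x : ℕ → X => fun k : ℕ => x (e₁ k)) :=
    measurable_pi_lambda _ fun k => measurable_pi_apply _
  have hm2 : Measurable (fun x : ℕ → X => fun k : ℕ => x (e₂ k)) :=
    measurable_pi_lambda _ fun k => measurable_pi_apply _
  have hQ1 := iid_comp h e₁ he₁
  have hQ2 := iid_comp h e₂ he₂
  haveI := hQ1.1; haveI := hQ2.1
  haveI : IsProbabilityMeasure
      (Measure.map (fun x : ℕ → X => (fun k : ℕ => x (e₁ k), fun k : ℕ => x (e₂ k))) P) :=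
    Measure.isProbabilityMeasure_map (hm1.prodMk hm2).aemeasurable
  refine ext_of_generate_finite _
    ((show (Prod.instMeasurableSpace : MeasurableSpace ((ℕ → X) × (ℕ → X))) = _ from ?_))
    (isPiSystem_boxes.prod isPiSystem_boxes) ?_ ?_
  · have h1 : (Prod.instMeasurableSpace : MeasurableSpace ((ℕ → X) × (ℕ → X)))
        = @Prod.instMeasurableSpace _ _ (MeasurableSpace.generateFrom (boxes X))
          (MeasurableSpace.generateFrom (boxes X)) := by
      rw [← generateFrom_boxes]
    exact h1.trans (generateFrom_prod_eq isCountablySpanning_boxes isCountablySpanning_boxes)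
  · rintro A ⟨B₁, hB₁, B₂, hB₂, rfl⟩
    obtain ⟨n, s, hs, rfl⟩ := hB₁
    obtain ⟨m, t, ht, rfl⟩ := hB₂
    rw [Measure.map_apply (hm1.prodMk hm2)
      ((measurableSet_of_mem_boxes ⟨n, s, hs, rfl⟩).prod
        (measurableSet_of_mem_boxes ⟨m, t, ht, rfl⟩)),
      Measure.prod_prod, hQ1.2 n s hs, hQ2.2 m t ht]
    have : (fun x : ℕ → X => (fun k : ℕ => x (e₁ k), fun k : ℕ => x (e₂ k))) ⁻¹'
        ({x | ∀ i : Fin n, x (i : ℕ) ∈ s i} ×ˢ {x | ∀ j : Fin m, x (j : ℕ) ∈ t j})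
        = {x | (∀ i : Fin n, x (e₁ (i : ℕ)) ∈ s i) ∧ ∀ j : Fin m, x (e₂ (j : ℕ)) ∈ t j} := rfl
    rw [this]
    exact iid_box_two h (fun i : Fin n => e₁ (i : ℕ)) (fun j : Fin m => e₂ (j : ℕ))
      (fun a b hab => Fin.ext (he₁ hab)) (fun a b hab => Fin.ext (he₂ hab))
      (fun i j => hdisj _ _) s t hs ht
  · simp [measure_univ]

lemma iid_prob_base (h : IsIIDProduct μ P) : IsProbabilityMeasure μ := by
  constructor
  haveI := h.1
  have h0 := h.2 1 (fun _ => Set.univ) (fun _ => MeasurableSet.univ)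
  simp at h0
  exact h0.symm

lemma iid_indepFun_eval (h : IsIIDProduct μ P) {i j : ℕ} (hij : i ≠ j) :
    ProbabilityTheory.IndepFun (fun x : ℕ → X => x i) (fun x : ℕ → X => x j) P := by
  rw [ProbabilityTheory.indepFun_iff_measure_inter_preimage_eq_mul]
  intro s t hs ht
  have h2 := iid_box_two h (fun _ : Fin 1 => i) (fun _ : Fin 1 => j)
    (fun a b _ => Subsingleton.elim a b) (fun a b _ => Subsingleton.elim a b)
    (fun _ _ => hij) (fun _ => s) (fun _ => t) (fun _ => hs) (fun _ => ht)
  have h1s := iid_box_inj h (fun _ : Fin 1 => i) (fun a b _ => Subsingleton.elim a b)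
    (fun _ => s) (fun _ => hs)
  have h1t := iid_box_inj h (fun _ : Fin 1 => j) (fun a b _ => Subsingleton.elim a b)
    (fun _ => t) (fun _ => ht)
  simp only [Finset.prod_const, Finset.card_univ, Fintype.card_fin, pow_one] at h2 h1s h1t
  have e2 : {x : ℕ → X | (∀ _ : Fin 1, x i ∈ s) ∧ ∀ _ : Fin 1, x j ∈ t}
      = (fun x : ℕ → X => x i) ⁻¹' s ∩ (fun x : ℕ → X => x j) ⁻¹' t := by
    ext x; simp [Set.mem_preimage]
  have es : {x : ℕ → X | ∀ _ : Fin 1, x i ∈ s} = (fun x : ℕ → X => x i) ⁻¹' s := by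
    ext x; simp
  have et : {x : ℕ → X | ∀ _ : Fin 1, x j ∈ t} = (fun x : ℕ → X => x j) ⁻¹' t := by
    ext x; simp
  rw [e2] at h2
  rw [es] at h1s
  rw [et] at h1t
  rw [h2, h1s, h1t]

/-- Strong law of large numbers for an iid product measure and a bounded measurable function. -/
lemma iid_slln (h : IsIIDProduct μ P) (φ : X → ℝ) (hmφ : Measurable φ)
    (hb : ∀ z, |φ z| ≤ 1) :
    ∀ᵐ w ∂P, Tendsto (fun n : ℕ => (n : ℝ)⁻¹ • ∑ k ∈ Finset.range n, φ (w k))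
      atTop (𝓝 (∫ z, φ z ∂μ)) := by
  haveI := h.1
  have hmeas : ∀ k : ℕ, Measurable (fun w : ℕ → X => φ (w k)) :=
    fun k => hmφ.comp (measurable_pi_apply k)
  have hint : Integrable (fun w : ℕ → X => φ (w 0)) P := by
    refine Integrable.mono' (integrable_const 1) (hmeas 0).aestronglyMeasurable ?_
    exact Filter.Eventually.of_forall fun w => by simpa [Real.norm_eq_abs] using hb (w 0)
  have hindep : Pairwise (Function.onFun (ProbabilityTheory.IndepFun · · P)
      fun (k : ℕ) (w : ℕ → X) => φ (w k)) := by
    intro i j hij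
    exact (iid_indepFun_eval h hij).comp hmφ hmφ
  have hident : ∀ k : ℕ, ProbabilityTheory.IdentDistrib (fun w : ℕ → X => φ (w k))
      (fun w : ℕ → X => φ (w 0)) P P := by
    intro k
    refine ⟨(hmeas k).aemeasurable, (hmeas 0).aemeasurable, ?_⟩
    have e1 : Measure.map (fun w : ℕ → X => φ (w k)) P
        = Measure.map φ (Measure.map (fun w : ℕ → X => w k) P) := by
      rw [Measure.map_map hmφ (measurable_pi_apply k)]; rfl
    have e2 : Measure.map (fun w : ℕ → X => φ (w 0)) P
        = Measure.map φ (Measure.map (fun w : ℕ → X => w 0) P) := by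
      rw [Measure.map_map hmφ (measurable_pi_apply 0)]; rfl
    rw [e1, e2, iid_map_eval h k, iid_map_eval h 0]
  have key := ProbabilityTheory.strong_law_ae (μ := P)
    (fun (k : ℕ) (w : ℕ → X) => φ (w k)) hint hindep hident
  have hE : (∫ w, φ (w 0) ∂P) = ∫ z, φ z ∂μ := by
    conv_rhs => rw [← iid_map_eval h 0]
    rw [integral_map (measurable_pi_apply 0).aemeasurable
      (hmφ.aestronglyMeasurable)]
  rw [hE] at key
  exact key

section Density

variable [MetricSpace X] [BorelSpace X] [SeparableSpace X]

lemma iid_dense (h : IsIIDProduct μ P)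
    (hfull : ∀ O : Set X, IsOpen O → O.Nonempty → 0 < μ O) :
    ∃ G : Set (ℕ → X), MeasurableSet G ∧ P G = 1 ∧ ∀ w ∈ G, DenseRange w := by
  classical
  haveI := h.1
  haveI hμ := iid_prob_base h
  obtain ⟨D, hDc, hDd⟩ := TopologicalSpace.exists_countable_dense X
  haveI := hDc.to_subtype
  set G : Set (ℕ → X) := ⋂ (d : D) (q : {q : ℚ // 0 < q}),
    {w : ℕ → X | ∃ i, w i ∈ Metric.ball (d : X) (q : ℚ)} with hG
  have hmG : MeasurableSet G := by
    refine MeasurableSet.iInter fun d => MeasurableSet.iInter fun q => ?_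
    have : {w : ℕ → X | ∃ i, w i ∈ Metric.ball (d : X) (q : ℚ)}
        = ⋃ i, (fun w : ℕ → X => w i) ⁻¹' Metric.ball (d : X) (q : ℚ) := by
      ext w; simp
    rw [this]
    exact MeasurableSet.iUnion fun i =>
      (measurable_pi_apply i) Metric.isOpen_ball.measurableSet
  have hae : ∀ᵐ w ∂P, w ∈ G := by
    rw [hG]
    simp only [Set.mem_iInter]
    rw [ae_all_iff]
    intro d
    rw [ae_all_iff]
    intro q
    set B : Set X := Metric.ball (d : X) (q : ℚ) with hB
    have hBq : (0 : ℝ) < (q : ℚ) := by exact_mod_cast q.2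
    have hBpos : 0 < μ B := hfull B Metric.isOpen_ball ⟨_, Metric.mem_ball_self hBq⟩
    have hBm : MeasurableSet B := Metric.isOpen_ball.measurableSet
    -- the bad event is null
    have hbad : P {w : ℕ → X | ∀ i, w i ∉ B} = 0 := by
      have hsub : ∀ n : ℕ, {w : ℕ → X | ∀ i, w i ∉ B}
          ⊆ {w : ℕ → X | ∀ i : Fin n, w (i : ℕ) ∈ Bᶜ} :=
        fun n w hw i => hw (i : ℕ)
      have hval : ∀ n : ℕ, P {w : ℕ → X | ∀ i : Fin n, w (i : ℕ) ∈ Bᶜ} = (μ Bᶜ) ^ n := by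
        intro n
        rw [h.2 n (fun _ => Bᶜ) (fun _ => hBm.compl)]
        simp
      have hlt : μ Bᶜ < 1 := by
        rw [prob_compl_eq_one_sub hBm]
        exact ENNReal.sub_lt_self ENNReal.one_ne_top one_ne_zero hBpos.ne'
      have htend : Tendsto (fun n : ℕ => (μ Bᶜ) ^ n) atTop (𝓝 0) :=
        ENNReal.tendsto_pow_atTop_nhds_zero_of_lt_one hlt
      have hle : ∀ n, P {w : ℕ → X | ∀ i, w i ∉ B} ≤ (μ Bᶜ) ^ n := by
        intro n
        rw [← hval n]
        exact measure_mono (hsub n)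
      have := ge_of_tendsto' htend hle
      exact le_antisymm this zero_le
    rw [ae_iff]
    convert hbad using 2
    ext w; simp
  refine ⟨G, hmG, ?_, ?_⟩
  · have := hae
    rw [ae_iff] at this
    have hc : {w : ℕ → X | ¬ w ∈ G} = Gᶜ := rfl
    rw [hc] at this
    rw [← prob_compl_eq_zero_iff hmG]
    exact this
  · intro w hw
    rw [Metric.denseRange_iff]
    intro z r hr
    obtain ⟨d, hdD, hdz⟩ : ∃ d ∈ D, d ∈ Metric.ball z (r / 2) := by
      have := hDd
      rw [Metric.dense_iff] at this
      obtain ⟨d, hd1, hd2⟩ := this z (r / 2) (by linarith)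
      exact ⟨d, hd2, hd1⟩
    obtain ⟨q, hq0, hq2⟩ := exists_rat_btwn (show (0:ℝ) < r / 2 by linarith)
    have hq0' : (0 : ℚ) < q := by exact_mod_cast hq0
    rw [hG] at hw
    simp only [Set.mem_iInter] at hw
    obtain ⟨i, hi⟩ := hw ⟨d, hdD⟩ ⟨q, hq0'⟩
    refine ⟨i, ?_⟩
    have h1 : dist (w i) d < (q : ℝ) := by simpa [Metric.mem_ball] using hi
    have h2 : dist d z < r / 2 := by simpa [Metric.mem_ball] using hdz
    calc dist z (w i) ≤ dist z d + dist d (w i) := dist_triangle _ _ _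
      _ < r / 2 + (q : ℝ) := by
          rw [dist_comm z d, dist_comm d (w i)]
          exact add_lt_add h2 h1
      _ < r / 2 + r / 2 := by linarith
      _ = r := by ring

end Density

section Extend

variable {Y₁ Y₂ : Type} [MetricSpace Y₁] [MetricSpace Y₂] [CompleteSpace Y₁] [CompleteSpace Y₂]

lemma extend_isometry (x : ℕ → Y₁) (y : ℕ → Y₂) (hx : DenseRange x) (hy : DenseRange y)
    (hd : ∀ i j, dist (x i) (x j) = dist (y i) (y j)) :
    ∃ V : Y₁ → Y₂, Function.Bijective V ∧ (∀ a b : Y₁, dist (V a) (V b) = dist a b) ∧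
      ∀ i, V (x i) = y i := by
  classical
  have hpos : ∀ k : ℕ, (0 : ℝ) < 1 / (k + 1) := fun k => by positivity
  have htend0 : Tendsto (fun k : ℕ => 1 / ((k : ℝ) + 1)) atTop (𝓝 0) :=
    tendsto_one_div_add_atTop_nhds_zero_nat
  set σ : Y₁ → ℕ → ℕ := fun z k => (hx.exists_dist_lt z (hpos k)).choose with hσdef
  have hσ : ∀ z k, dist z (x (σ z k)) < 1 / (k + 1) :=
    fun z k => (hx.exists_dist_lt z (hpos k)).choose_spec
  have hxσ : ∀ z, Tendsto (fun k => x (σ z k)) atTop (𝓝 z) := by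
    intro z
    rw [tendsto_iff_dist_tendsto_zero]
    refine squeeze_zero (fun k => dist_nonneg) (fun k => ?_) htend0
    rw [dist_comm]
    exact (hσ z k).le
  have hcauchy : ∀ z : Y₁, CauchySeq (fun k => y (σ z k)) := by
    intro z
    refine cauchySeq_of_le_tendsto_0 (fun N => 2 / (N + 1)) (fun n m N hn hm => ?_) ?_
    · rw [← hd]
      have h1 : dist (x (σ z n)) (x (σ z m)) ≤ dist z (x (σ z n)) + dist z (x (σ z m)) := by
        rw [dist_comm z (x (σ z n))]
        exact dist_triangle _ _ _
      have h2 : dist z (x (σ z n)) ≤ 1 / (N + 1) :=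
        (hσ z n).le.trans (by
          apply one_div_le_one_div_of_le (by positivity)
          exact_mod_cast Nat.succ_le_succ hn)
      have h3 : dist z (x (σ z m)) ≤ 1 / (N + 1) :=
        (hσ z m).le.trans (by
          apply one_div_le_one_div_of_le (by positivity)
          exact_mod_cast Nat.succ_le_succ hm)
      calc dist (x (σ z n)) (x (σ z m)) ≤ _ + _ := h1
        _ ≤ 1 / (N + 1) + 1 / (N + 1) := add_le_add h2 h3
        _ = 2 / (N + 1) := by ring
    · have : (fun N : ℕ => 2 / ((N : ℝ) + 1)) = fun N : ℕ => 2 * (1 / ((N : ℝ) + 1)) := by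
        funext N; ring
      rw [this]
      simpa using htend0.const_mul (2 : ℝ)
  set V : Y₁ → Y₂ := fun z => (cauchySeq_tendsto_of_complete (hcauchy z)).choose with hVdef
  have hV : ∀ z, Tendsto (fun k => y (σ z k)) atTop (𝓝 (V z)) :=
    fun z => (cauchySeq_tendsto_of_complete (hcauchy z)).choose_spec
  have hdist : ∀ a b : Y₁, dist (V a) (V b) = dist a b := by
    intro a b
    have h1 : Tendsto (fun k => dist (y (σ a k)) (y (σ b k))) atTop (𝓝 (dist (V a) (V b))) :=
      (hV a).dist (hV b)
    have h2 : Tendsto (fun k => dist (x (σ a k)) (x (σ b k))) atTop (𝓝 (dist a b)) :=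
      (hxσ a).dist (hxσ b)
    have heq : (fun k => dist (y (σ a k)) (y (σ b k)))
        = fun k => dist (x (σ a k)) (x (σ b k)) := by
      funext k; rw [hd]
    rw [heq] at h1
    exact tendsto_nhds_unique h1 h2
  have hVx : ∀ i, V (x i) = y i := by
    intro i
    refine tendsto_nhds_unique (hV (x i)) ?_
    rw [tendsto_iff_dist_tendsto_zero]
    refine squeeze_zero (fun k => dist_nonneg) (fun k => ?_) htend0
    rw [← hd]
    rw [dist_comm]
    exact (hσ (x i) k).le
  have hinj : Function.Injective V := by
    intro a b hab
    have := hdist a b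
    rw [hab, dist_self] at this
    exact (dist_eq_zero.mp this.symm)
  have hsurj : Function.Surjective V := by
    intro b
    set τ : ℕ → ℕ := fun k => (hy.exists_dist_lt b (hpos k)).choose with hτdef
    have hτ : ∀ k, dist b (y (τ k)) < 1 / (k + 1) :=
      fun k => (hy.exists_dist_lt b (hpos k)).choose_spec
    have hyτ : Tendsto (fun k => y (τ k)) atTop (𝓝 b) := by
      rw [tendsto_iff_dist_tendsto_zero]
      refine squeeze_zero (fun k => dist_nonneg) (fun k => ?_) htend0
      rw [dist_comm]
      exact (hτ k).le
    have hcauchyx : CauchySeq (fun k => x (τ k)) := by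
      refine cauchySeq_of_le_tendsto_0 (fun N => 2 / (N + 1)) (fun n m N hn hm => ?_) ?_
      · rw [hd]
        have h1 : dist (y (τ n)) (y (τ m)) ≤ dist b (y (τ n)) + dist b (y (τ m)) := by
          rw [dist_comm b (y (τ n))]
          exact dist_triangle _ _ _
        have h2 : dist b (y (τ n)) ≤ 1 / (N + 1) :=
          (hτ n).le.trans (by
            apply one_div_le_one_div_of_le (by positivity)
            exact_mod_cast Nat.succ_le_succ hn)
        have h3 : dist b (y (τ m)) ≤ 1 / (N + 1) :=
          (hτ m).le.trans (by
            apply one_div_le_one_div_of_le (by positivity)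
            exact_mod_cast Nat.succ_le_succ hm)
        calc dist (y (τ n)) (y (τ m)) ≤ _ + _ := h1
          _ ≤ 1 / (N + 1) + 1 / (N + 1) := add_le_add h2 h3
          _ = 2 / (N + 1) := by ring
      · have : (fun N : ℕ => 2 / ((N : ℝ) + 1)) = fun N : ℕ => 2 * (1 / ((N : ℝ) + 1)) := by
          funext N; ring
        rw [this]
        simpa using htend0.const_mul (2 : ℝ)
    obtain ⟨a, ha⟩ := cauchySeq_tendsto_of_complete hcauchyx
    refine ⟨a, ?_⟩
    have h2 : Tendsto (fun k => y (τ k)) atTop (𝓝 (V a)) := by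
      rw [tendsto_iff_dist_tendsto_zero]
      have hb1 : Tendsto (fun k => dist (x (τ k)) (x (σ a k))) atTop (𝓝 0) := by
        have := ha.dist (hxσ a)
        simpa using this
      have hb2 : Tendsto (fun k => dist (y (σ a k)) (V a)) atTop (𝓝 0) := by
        have := (hV a).dist (tendsto_const_nhds (x := V a))
        simpa using this
      refine squeeze_zero (fun k => dist_nonneg) (fun k => ?_) (by simpa using hb1.add hb2)
      calc dist (y (τ k)) (V a) ≤ dist (y (τ k)) (y (σ a k)) + dist (y (σ a k)) (V a) :=
            dist_triangle _ _ _
        _ = dist (x (τ k)) (x (σ a k)) + dist (y (σ a k)) (V a) := by rw [← hd]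
    exact (tendsto_nhds_unique h2 hyτ)
  exact ⟨V, ⟨hinj, hsurj⟩, hdist, hVx⟩

end Extend

section Fam

variable {Y : Type} [MetricSpace Y]

/-- a tent function of height 1 around `c` with radius `q` (0 if `q ≤ 0`) -/
noncomputable def tent (q : ℚ) (c z : Y) : NNReal :=
  Real.toNNReal (if 0 < q then 1 - dist z c / q else 0)

/-- finite suprema of tent functions with centers from the sequence `c` -/
noncomputable def fam (K : Finset (ℕ × ℚ)) (c : ℕ → Y) (z : Y) : NNReal :=
  K.sup fun p => tent p.2 (c p.1) z

lemma tent_le_one {q : ℚ} {c z : Y} : tent q c z ≤ 1 := by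
  rw [tent]
  have : Real.toNNReal 1 = 1 := by simp
  rw [← this]
  apply Real.toNNReal_mono
  split
  · next hq =>
    have hq' : (0 : ℝ) < (q : ℝ) := by exact_mod_cast hq
    have : 0 ≤ dist z c / (q : ℝ) := div_nonneg dist_nonneg hq'.le
    linarith
  · norm_num

lemma fam_le_one {K : Finset (ℕ × ℚ)} {c : ℕ → Y} {z : Y} : fam K c z ≤ 1 :=
  Finset.sup_le fun _ _ => tent_le_one

lemma tent_pos_imp {q : ℚ} {c z : Y} (h : 0 < tent q c z) :
    0 < (q : ℝ) ∧ dist z c < (q : ℝ) := by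
  rw [tent, Real.toNNReal_pos] at h
  by_cases hq : 0 < q
  · rw [if_pos hq] at h
    have hq' : (0 : ℝ) < (q : ℝ) := by exact_mod_cast hq
    refine ⟨hq', ?_⟩
    have : dist z c / (q : ℝ) < 1 := by linarith
    calc dist z c = dist z c / (q : ℝ) * q := by field_simp
      _ < 1 * q := by exact mul_lt_mul_of_pos_right this hq'
      _ = q := one_mul _
  · rw [if_neg hq] at h
    norm_num at h

lemma continuous_tent_pair {q : ℚ} {i : ℕ} :
    Continuous fun p : (ℕ → Y) × Y => tent q (p.1 i) p.2 := by
  apply Continuous.comp continuous_real_toNNReal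
  by_cases hq : 0 < q
  · simp only [if_pos hq]
    exact continuous_const.sub ((continuous_snd.dist
      ((continuous_apply i).comp continuous_fst)).div_const _)
  · simp only [if_neg hq]
    exact continuous_const

lemma continuous_fam_pair {K : Finset (ℕ × ℚ)} :
    Continuous fun p : (ℕ → Y) × Y => fam K p.1 p.2 := by
  classical
  induction K using Finset.induction_on with
  | empty => simp only [fam, Finset.sup_empty]; exact continuous_const
  | insert _ _ hnotmem ih =>
    simp only [fam, Finset.sup_insert]
    exact Continuous.sup continuous_tent_pair ih

lemma continuous_fam_z {K : Finset (ℕ × ℚ)} {c : ℕ → Y} :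
    Continuous fun z : Y => fam K c z :=
  continuous_fam_pair.comp (Continuous.prodMk_right c)

lemma continuous_fam_c {K : Finset (ℕ × ℚ)} {z : Y} :
    Continuous fun c : ℕ → Y => fam K c z :=
  continuous_fam_pair.comp (continuous_id.prodMk continuous_const)

lemma continuous_tent_comp {Z : Type} [TopologicalSpace Z] {q : ℚ} {a : Z → Y} {b : Z → Y}
    (ha : Continuous a) (hb : Continuous b) :
    Continuous fun z => ((tent q (a z) (b z) : ℝ)) := by
  have hrw : (fun z => ((tent q (a z) (b z) : ℝ)))
      = fun z => max (if 0 < q then 1 - dist (b z) (a z) / q else 0) 0 := by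
    funext z
    rw [tent, Real.coe_toNNReal']
  rw [hrw]
  refine Continuous.max ?_ continuous_const
  by_cases hq : 0 < q
  · simp only [if_pos hq]
    exact continuous_const.sub ((hb.dist ha).div_const _)
  · simp only [if_neg hq]
    exact continuous_const

lemma continuous_fam_comp {Z : Type} [TopologicalSpace Z] {K : Finset (ℕ × ℚ)}
    {a : Z → ℕ → Y} {b : Z → Y} (ha : Continuous a) (hb : Continuous b) :
    Continuous fun z => ((fam K (a z) (b z) : ℝ)) := by
  classical
  induction K using Finset.induction_on with
  | empty =>
    have : (fun z => ((fam (∅ : Finset (ℕ × ℚ)) (a z) (b z) : ℝ))) = fun _ => (0 : ℝ) := by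
      funext z; simp [fam]
    rw [this]; exact continuous_const
  | @insert p K hnotmem ih =>
    have : (fun z => ((fam (insert p K) (a z) (b z) : ℝ)))
        = fun z => max ((tent p.2 (a z p.1) (b z) : ℝ)) ((fam K (a z) (b z) : ℝ)) := by
      funext z
      rw [fam, Finset.sup_insert]
      rw [show ((tent p.2 (a z p.1) (b z) ⊔ K.sup fun p => tent p.2 (a z p.1) (b z) : ℝ≥0) : ℝ)
        = max ((tent p.2 (a z p.1) (b z) : ℝ))
          (((K.sup fun p => tent p.2 (a z p.1) (b z) : ℝ≥0)) : ℝ) from NNReal.coe_max _ _]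
      rfl
    rw [this]
    exact Continuous.max (continuous_tent_comp ((continuous_apply p.1).comp ha) hb) ih

lemma fam_mono {K K' : Finset (ℕ × ℚ)} (h : K ⊆ K') {c : ℕ → Y} {z : Y} :
    fam K c z ≤ fam K' c z :=
  Finset.sup_mono h

lemma tent_map {Y' : Type} [MetricSpace Y'] {V : Y → Y'} (hV : ∀ a b, dist (V a) (V b) = dist a b)
    {q : ℚ} {c z : Y} : tent q (V c) (V z) = tent q c z := by
  rw [tent, tent, hV]

lemma fam_map {Y' : Type} [MetricSpace Y'] {V : Y → Y'} (hV : ∀ a b, dist (V a) (V b) = dist a b)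
    {K : Finset (ℕ × ℚ)} {c : ℕ → Y} {z : Y} : fam K (fun i => V (c i)) (V z) = fam K c z :=
  Finset.sup_congr rfl fun p _ => tent_map hV

/-- approximation of open sets from inside by elements of the family with dense centers -/
lemma fam_approx (c : ℕ → Y) (hc : DenseRange c) {U : Set Y} (hU : IsOpen U) :
    ∃ K : ℕ → Finset (ℕ × ℚ), Monotone K ∧
      ∀ z, (⨆ n, (fam (K n) c z : ℝ≥0∞)) = U.indicator (fun _ => (1 : ℝ≥0∞)) z := by
  classical
  set S : Set (ℕ × ℚ) := {p | 0 < (p.2 : ℝ) ∧ Metric.ball (c p.1) (p.2 : ℝ) ⊆ U} with hS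
  set e : ℕ → ℕ × ℚ := fun n => (Denumerable.eqv (ℕ × ℚ)).symm n with he
  refine ⟨fun n => (Finset.range n).image e |>.filter (fun p => p ∈ S), ?_, ?_⟩
  · intro n m hnm
    exact Finset.filter_subset_filter _ (Finset.image_subset_image (Finset.range_subset_range.2 hnm))
  · intro z
    by_cases hz : z ∈ U
    · rw [Set.indicator_of_mem hz]
      refine le_antisymm (iSup_le fun n => ?_) ?_
      · exact_mod_cast fam_le_one (K := _) (c := c) (z := z)
      · -- 1 ≤ ⨆ ...
        refine ENNReal.le_of_forall_pos_le_add fun ε hε hlt => ?_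
        rcases le_or_gt 1 (ε : ℝ≥0∞) with hε1 | hε1
        · calc (1 : ℝ≥0∞) ≤ ε := hε1
            _ ≤ _ + ε := le_add_self
        · have hεR : (0 : ℝ) < (ε : ℝ) := hε
          have hεR1 : (ε : ℝ) < 1 := by exact_mod_cast hε1
          obtain ⟨ε', hε', hball⟩ := Metric.isOpen_iff.1 hU z hz
          obtain ⟨q, hq0, hq2⟩ := exists_rat_btwn (show (0 : ℝ) < ε' / 2 by linarith)
          have hq0' : (0 : ℝ) < (q : ℝ) := by exact_mod_cast hq0
          obtain ⟨i, hi⟩ := hc.exists_dist_lt z (show (0 : ℝ) < (q : ℝ) * ε from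
            mul_pos hq0' hεR)
          set p : ℕ × ℚ := (i, q) with hp
          have hpS : p ∈ S := by
            constructor
            · exact hq0'
            · intro w hw
              apply hball
              rw [Metric.mem_ball] at hw ⊢
              have hdzc : dist z (c i) < (q : ℝ) * ε := hi
              calc dist w z ≤ dist w (c i) + dist (c i) z := dist_triangle _ _ _
                _ < (q : ℝ) + (q : ℝ) * ε := by
                    rw [dist_comm (c i) z]
                    exact add_lt_add hw hdzc
                _ ≤ (q : ℝ) + (q : ℝ) := by nlinarith
                _ < ε' := by linarith
          set n : ℕ := (Denumerable.eqv (ℕ × ℚ)) p + 1 with hn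
          have hpe : e ((Denumerable.eqv (ℕ × ℚ)) p) = p := by
            rw [he]; exact Equiv.symm_apply_apply _ p
          have hpK : p ∈ ((Finset.range n).image e |>.filter (fun p => p ∈ S)) := by
            rw [Finset.mem_filter]
            refine ⟨Finset.mem_image.2 ⟨(Denumerable.eqv (ℕ × ℚ)) p, ?_, hpe⟩, hpS⟩
            rw [Finset.mem_range]
            omega
          have htent : Real.toNNReal (1 - (ε : ℝ)) ≤ tent q (c i) z := by
            have hq0q : 0 < q := by exact_mod_cast hq0'
            rw [tent, if_pos hq0q]
            apply Real.toNNReal_mono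
            have : dist z (c i) / (q : ℝ) ≤ ε := by
              rw [div_le_iff₀ hq0']
              calc dist z (c i) ≤ (q : ℝ) * ε := hi.le
                _ = ε * q := by ring
            linarith
          have hfam : Real.toNNReal (1 - (ε : ℝ)) ≤
              fam ((Finset.range n).image e |>.filter (fun p => p ∈ S)) c z :=
            le_trans htent (Finset.le_sup (f := fun p : ℕ × ℚ => tent p.2 (c p.1) z) hpK)
          have step1 : (Real.toNNReal (1 - (ε : ℝ)) : ℝ≥0∞) ≤
              ⨆ m, (fam ((Finset.range m).image e |>.filter (fun p => p ∈ S)) c z : ℝ≥0∞) :=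
            le_trans (by exact_mod_cast hfam) (le_iSup _ n)
          calc (1 : ℝ≥0∞) = ENNReal.ofReal ((1 - (ε : ℝ)) + (ε : ℝ)) := by norm_num
            _ = ENNReal.ofReal (1 - (ε : ℝ)) + ENNReal.ofReal (ε : ℝ) := by
                rw [ENNReal.ofReal_add (by linarith) hεR.le]
            _ ≤ _ + ε := by
                apply add_le_add
                · exact step1
                · rw [ENNReal.ofReal_coe_nnreal]
    · rw [Set.indicator_of_notMem hz]
      refine le_antisymm (iSup_le fun n => ?_) zero_le
      have : fam ((Finset.range n).image e |>.filter (fun p => p ∈ S)) c z = 0 := by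
        apply le_antisymm _ zero_le
        apply Finset.sup_le
        intro p hp
        rw [Finset.mem_filter] at hp
        by_contra hpos
        push_neg at hpos
        have h2 := tent_pos_imp hpos
        exact hz (hp.2.2 (by rw [Metric.mem_ball]; exact h2.2))
      rw [this]
      simp

end Fam

section FamMeasure

variable {Y : Type} [MetricSpace Y] [MeasurableSpace Y] [BorelSpace Y]

lemma measure_eq_of_fam (ν ρ : Measure Y) [IsProbabilityMeasure ν] [IsProbabilityMeasure ρ]
    (c : ℕ → Y) (hc : DenseRange c)
    (h : ∀ K : Finset (ℕ × ℚ), ∫⁻ z, (fam K c z : ℝ≥0∞) ∂ν = ∫⁻ z, (fam K c z : ℝ≥0∞) ∂ρ) :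
    ν = ρ := by
  have hopen : ∀ U : Set Y, IsOpen U → ν U = ρ U := by
    intro U hU
    obtain ⟨K, hKmono, hKsup⟩ := fam_approx c hc hU
    have hmeas : ∀ n, Measurable fun z => (fam (K n) c z : ℝ≥0∞) :=
      fun n => (continuous_fam_z.measurable).coe_nnreal_ennreal
    have hmono : Monotone fun n => fun z => (fam (K n) c z : ℝ≥0∞) := by
      intro n m hnm z
      exact ENNReal.coe_le_coe.2 (fam_mono (hKmono hnm))
    have calc1 : ∀ (m : Measure Y), m U = ⨆ n, ∫⁻ z, (fam (K n) c z : ℝ≥0∞) ∂m := by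
      intro m
      rw [← lintegral_indicator_one hU.measurableSet]
      rw [show (U.indicator (1 : Y → ℝ≥0∞)) = fun z => ⨆ n, (fam (K n) c z : ℝ≥0∞) by
        funext z; rw [hKsup z]; rfl]
      rw [lintegral_iSup hmeas hmono]
    rw [calc1 ν, calc1 ρ]
    exact iSup_congr fun n => h (K n)
  refine ext_of_generate_finite {s : Set Y | IsOpen s} ?_ isPiSystem_isOpen ?_ ?_
  · exact BorelSpace.measurable_eq (α := Y)
  · exact fun s hs => hopen s hs
  · simp [measure_univ]

end FamMeasure

section GoodSet

variable {Y : Type} [MeasurableSpace Y] [MetricSpace Y] [BorelSpace Y] [SeparableSpace Y]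
variable {μ : Measure Y} {P : Measure (ℕ → Y)}

lemma good_set (h : IsIIDProduct μ P)
    (hfull : ∀ O : Set Y, IsOpen O → O.Nonempty → 0 < μ O) :
    ∃ G : Set (ℕ → Y), MeasurableSet G ∧ P G = 1 ∧ ∀ x ∈ G,
      DenseRange (fun i => x (2 * i + 1)) ∧
      ∀ K : Finset (ℕ × ℚ),
        Tendsto (fun n : ℕ => (n : ℝ)⁻¹ • ∑ k ∈ Finset.range n,
            ((fam K (fun i => x (2 * i + 1)) (x (2 * k)) : ℝ)))
          atTop (𝓝 (∫ z, ((fam K (fun i => x (2 * i + 1)) z : ℝ)) ∂μ)) := by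
  classical
  haveI := h.1
  haveI := iid_prob_base h
  haveI : SecondCountableTopology Y := UniformSpace.secondCountable_of_separable Y
  haveI : BorelSpace (ℕ → Y) := Pi.borelSpace
  set e₁ : ℕ → ℕ := fun i => 2 * i + 1 with he₁
  set e₂ : ℕ → ℕ := fun k => 2 * k with he₂
  have he₁i : Function.Injective e₁ := fun a b hab => by
    simp only [he₁] at hab; omega
  have he₂i : Function.Injective e₂ := fun a b hab => by
    simp only [he₂] at hab; omega
  have hdisj : ∀ i j, e₁ i ≠ e₂ j := fun i j => by
    simp only [he₁, he₂]; omega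
  set To : (ℕ → Y) → (ℕ → Y) := fun x k => x (e₁ k) with hTo
  set Te : (ℕ → Y) → (ℕ → Y) := fun x k => x (e₂ k) with hTe
  have hmTo : Measurable To := measurable_pi_lambda _ fun k => measurable_pi_apply _
  have hmTe : Measurable Te := measurable_pi_lambda _ fun k => measurable_pi_apply _
  set Po : Measure (ℕ → Y) := Measure.map To P with hPo
  set Pe : Measure (ℕ → Y) := Measure.map Te P with hPe
  have hPoiid : IsIIDProduct μ Po := iid_comp h e₁ he₁i
  have hPeiid : IsIIDProduct μ Pe := iid_comp h e₂ he₂i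
  haveI := hPoiid.1
  haveI := hPeiid.1
  have hsplit := iid_split h e₁ e₂ he₁i he₂i hdisj
  set T : (ℕ → Y) → (ℕ → Y) × (ℕ → Y) := fun x => (To x, Te x) with hT
  have hmT : Measurable T := hmTo.prodMk hmTe
  -- density part
  obtain ⟨Gd, hGdm, hGd1, hGdd⟩ := iid_dense hPoiid hfull
  set Gd' : Set (ℕ → Y) := To ⁻¹' Gd with hGd'
  have hGd'm : MeasurableSet Gd' := hmTo hGdm
  have hGd'1 : P Gd' = 1 := by
    rw [hGd', ← Measure.map_apply hmTo hGdm, ← hPo, hGd1]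
  -- SLLN part
  have hslln : ∀ K : Finset (ℕ × ℚ), ∃ A : Set (ℕ → Y), MeasurableSet A ∧ P A = 1 ∧
      ∀ x ∈ A, Tendsto (fun n : ℕ => (n : ℝ)⁻¹ • ∑ k ∈ Finset.range n,
          ((fam K (To x) (Te x k) : ℝ)))
        atTop (𝓝 (∫ z, ((fam K (To x) z : ℝ)) ∂μ)) := by
    intro K
    set g : (ℕ → Y) → ℝ := fun u => ∫ z, ((fam K u z : ℝ)) ∂μ with hg
    have hgc : Continuous g := by
      refine continuous_of_dominated (F := fun u z => ((fam K u z : ℝ))) (bound := fun _ => 1)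
        ?_ ?_ (integrable_const 1) ?_
      · intro u
        exact (continuous_fam_comp continuous_const continuous_id).aestronglyMeasurable
      · intro u
        refine Filter.Eventually.of_forall fun z => ?_
        rw [Real.norm_eq_abs, abs_of_nonneg (by positivity)]
        exact_mod_cast fam_le_one
      · refine Filter.Eventually.of_forall fun z => ?_
        exact continuous_fam_comp continuous_id continuous_const
    set B : Set ((ℕ → Y) × (ℕ → Y)) := {uw | Tendsto (fun n : ℕ => (n : ℝ)⁻¹ •
        ∑ k ∈ Finset.range n, ((fam K uw.1 (uw.2 k) : ℝ))) atTop (𝓝 (g uw.1))} with hB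
    have hmF : ∀ n : ℕ, Measurable (fun uw : (ℕ → Y) × (ℕ → Y) =>
        (n : ℝ)⁻¹ • ∑ k ∈ Finset.range n, ((fam K uw.1 (uw.2 k) : ℝ))) := by
      intro n
      refine Measurable.fun_const_smul ?_ _
      apply Finset.measurable_sum
      intro k _
      have : Continuous fun uw : (ℕ → Y) × (ℕ → Y) => ((fam K uw.1 (uw.2 k) : ℝ)) :=
        continuous_fam_comp continuous_fst ((continuous_apply k).comp continuous_snd)
      exact this.measurable
    have hmB : MeasurableSet B :=
      measurableSet_tendsto_fun hmF (hgc.measurable.comp measurable_fst)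
    have hslice : ∀ u : ℕ → Y, ∀ᵐ w ∂Pe, (u, w) ∈ B := by
      intro u
      have := iid_slln hPeiid (fun z => ((fam K u z : ℝ)))
        (continuous_fam_comp continuous_const continuous_id).measurable
        (fun z => by
          rw [abs_of_nonneg (by positivity)]
          exact_mod_cast fam_le_one)
      exact this
    have hprodB : (Po.prod Pe) B = 1 := by
      rw [← prob_compl_eq_zero_iff hmB]
      rw [Measure.measure_prod_null hmB.compl]
      refine Filter.Eventually.of_forall fun u => ?_
      rw [Pi.zero_apply]
      have := hslice u
      rw [ae_iff] at this
      convert this using 2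
      rfl
    refine ⟨T ⁻¹' B, hmT hmB, ?_, ?_⟩
    · rw [← Measure.map_apply hmT hmB, hsplit]
      exact hprodB
    · intro x hx
      exact hx
  choose A hAm hA1 hAP using hslln
  set G : Set (ℕ → Y) := Gd' ∩ ⋂ K : Finset (ℕ × ℚ), A K with hGdef
  have hGm : MeasurableSet G := hGd'm.inter (MeasurableSet.iInter fun K => hAm K)
  have hG1 : P G = 1 := by
    rw [← prob_compl_eq_zero_iff hGm]
    have h1 : ∀ᵐ x ∂P, x ∈ Gd' := by
      rw [ae_iff]
      have : P Gd'ᶜ = 0 := by rw [prob_compl_eq_zero_iff hGd'm]; exact hGd'1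
      convert this using 2
      rfl
    have h2 : ∀ᵐ x ∂P, ∀ K : Finset (ℕ × ℚ), x ∈ A K := by
      rw [ae_all_iff]
      intro K
      rw [ae_iff]
      have : P (A K)ᶜ = 0 := by rw [prob_compl_eq_zero_iff (hAm K)]; exact hA1 K
      convert this using 2
      rfl
    have h3 : ∀ᵐ x ∂P, x ∈ G := by
      filter_upwards [h1, h2] with x hx1 hx2
      exact ⟨hx1, Set.mem_iInter.2 hx2⟩
    rw [ae_iff] at h3
    convert h3 using 2
    rfl
  refine ⟨G, hGm, hG1, ?_⟩
  intro x hx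
  constructor
  · exact hGdd _ hx.1
  · intro K
    have := hAP K x (Set.mem_iInter.1 hx.2 K)
    exact this

end GoodSet

section Select

variable {X₁ X₂ : Type}
  [MetricSpace X₁] [CompleteSpace X₁] [SeparableSpace X₁] [MeasurableSpace X₁] [BorelSpace X₁]
  [MetricSpace X₂] [CompleteSpace X₂] [SeparableSpace X₂] [MeasurableSpace X₂] [BorelSpace X₂]

lemma continuous_distFun (X : Type) [MetricSpace X] : Continuous (distFun X) :=
  continuous_pi fun i => continuous_pi fun j =>
    Continuous.dist (continuous_apply i) (continuous_apply j)

lemma common_matrix (P₁ : Measure (ℕ → X₁)) [IsProbabilityMeasure P₁]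
    (P₂ : Measure (ℕ → X₂)) [IsProbabilityMeasure P₂]
    (hD : Measure.map (distFun X₁) P₁ = Measure.map (distFun X₂) P₂)
    (G₁ : Set (ℕ → X₁)) (hG₁m : MeasurableSet G₁) (hG₁ : P₁ G₁ = 1)
    (G₂ : Set (ℕ → X₂)) (hG₂m : MeasurableSet G₂) (hG₂ : P₂ G₂ = 1) :
    ∃ (x : ℕ → X₁) (y : ℕ → X₂), x ∈ G₁ ∧ y ∈ G₂ ∧ distFun X₁ x = distFun X₂ y := by
  classical
  have hm₁ : Measurable (distFun X₁) := (continuous_distFun X₁).measurable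
  have hm₂ : Measurable (distFun X₂) := (continuous_distFun X₂).measurable
  rcases isEmpty_or_nonempty (ℕ → X₁) with hemp | hne₁
  · exfalso
    have : P₁ (Set.univ : Set (ℕ → X₁)) = 1 := measure_univ
    rw [Set.univ_eq_empty_iff.2 hemp] at this
    simp at this
  rcases isEmpty_or_nonempty (ℕ → X₂) with hemp | hne₂
  · exfalso
    have : P₂ (Set.univ : Set (ℕ → X₂)) = 1 := measure_univ
    rw [Set.univ_eq_empty_iff.2 hemp] at this
    simp at this
  set D : Measure (ℕ → ℕ → ℝ) := Measure.map (distFun X₁) P₁ with hDdef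
  set emb₁ : (ℕ → X₁) → (ℕ → ℕ → ℝ) × (ℕ → X₁) := fun w => (distFun X₁ w, w) with hemb₁
  set emb₂ : (ℕ → X₂) → (ℕ → ℕ → ℝ) × (ℕ → X₂) := fun w => (distFun X₂ w, w) with hemb₂
  have hmemb₁ : Measurable emb₁ := hm₁.prodMk measurable_id
  have hmemb₂ : Measurable emb₂ := hm₂.prodMk measurable_id
  set ρ₁ : Measure ((ℕ → ℕ → ℝ) × (ℕ → X₁)) := Measure.map emb₁ P₁ with hρ₁
  set ρ₂ : Measure ((ℕ → ℕ → ℝ) × (ℕ → X₂)) := Measure.map emb₂ P₂ with hρ₂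
  haveI : IsProbabilityMeasure D := Measure.isProbabilityMeasure_map hm₁.aemeasurable
  haveI : IsProbabilityMeasure ρ₁ := Measure.isProbabilityMeasure_map hmemb₁.aemeasurable
  haveI : IsProbabilityMeasure ρ₂ := Measure.isProbabilityMeasure_map hmemb₂.aemeasurable
  have hfst₁ : ρ₁.fst = D := by
    rw [hρ₁, Measure.fst, Measure.map_map measurable_fst hmemb₁, hDdef]
    rfl
  have hfst₂ : ρ₂.fst = D := by
    rw [hρ₂, Measure.fst, Measure.map_map measurable_fst hmemb₂, hD]
    rfl
  set κ₁ := ρ₁.condKernel with hκ₁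
  set κ₂ := ρ₂.condKernel with hκ₂
  have hdis₁ : D.compProd κ₁ = ρ₁ := by rw [← hfst₁, hκ₁]; exact ρ₁.disintegrate _
  have hdis₂ : D.compProd κ₂ = ρ₂ := by rw [← hfst₂, hκ₂]; exact ρ₂.disintegrate _
  -- the good event, in the product space
  have hS₁ : MeasurableSet {z : (ℕ → ℕ → ℝ) × (ℕ → X₁) | z.2 ∈ G₁ ∧ distFun X₁ z.2 = z.1} := by
    refine MeasurableSet.inter (measurable_snd hG₁m) ?_
    exact measurableSet_eq_fun (hm₁.comp measurable_snd) measurable_fst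
  have hS₂ : MeasurableSet {z : (ℕ → ℕ → ℝ) × (ℕ → X₂) | z.2 ∈ G₂ ∧ distFun X₂ z.2 = z.1} := by
    refine MeasurableSet.inter (measurable_snd hG₂m) ?_
    exact measurableSet_eq_fun (hm₂.comp measurable_snd) measurable_fst
  have hae₁ : ∀ᵐ z ∂ρ₁, z.2 ∈ G₁ ∧ distFun X₁ z.2 = z.1 := by
    rw [ae_iff, hρ₁, Measure.map_apply hmemb₁]
    · have : emb₁ ⁻¹' {z : (ℕ → ℕ → ℝ) × (ℕ → X₁) | ¬(z.2 ∈ G₁ ∧ distFun X₁ z.2 = z.1)}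
          = G₁ᶜ := by
        ext w
        simp [hemb₁]
      rw [show {a : (ℕ → ℕ → ℝ) × (ℕ → X₁) | ¬(a.2 ∈ G₁ ∧ distFun X₁ a.2 = a.1)} =
        {z : (ℕ → ℕ → ℝ) × (ℕ → X₁) | ¬(z.2 ∈ G₁ ∧ distFun X₁ z.2 = z.1)} from rfl, this]
      rw [prob_compl_eq_zero_iff hG₁m]
      exact hG₁
    · exact hS₁.compl
  have hae₂ : ∀ᵐ z ∂ρ₂, z.2 ∈ G₂ ∧ distFun X₂ z.2 = z.1 := by
    rw [ae_iff, hρ₂, Measure.map_apply hmemb₂]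
    · have : emb₂ ⁻¹' {z : (ℕ → ℕ → ℝ) × (ℕ → X₂) | ¬(z.2 ∈ G₂ ∧ distFun X₂ z.2 = z.1)}
          = G₂ᶜ := by
        ext w
        simp [hemb₂]
      rw [show {a : (ℕ → ℕ → ℝ) × (ℕ → X₂) | ¬(a.2 ∈ G₂ ∧ distFun X₂ a.2 = a.1)} =
        {z : (ℕ → ℕ → ℝ) × (ℕ → X₂) | ¬(z.2 ∈ G₂ ∧ distFun X₂ z.2 = z.1)} from rfl, this]
      rw [prob_compl_eq_zero_iff hG₂m]
      exact hG₂
    · exact hS₂.compl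
  rw [← hdis₁] at hae₁
  rw [← hdis₂] at hae₂
  have h1 := Measure.ae_ae_of_ae_compProd hae₁
  have h2 := Measure.ae_ae_of_ae_compProd hae₂
  haveI : (ae D).NeBot := ae_neBot.2 (IsProbabilityMeasure.ne_zero D)
  obtain ⟨r, hr1, hr2⟩ := (h1.and h2).exists
  haveI : IsProbabilityMeasure (κ₁ r) := by
    haveI : ProbabilityTheory.IsMarkovKernel κ₁ := by
      rw [hκ₁]; infer_instance
    infer_instance
  haveI : IsProbabilityMeasure (κ₂ r) := by
    haveI : ProbabilityTheory.IsMarkovKernel κ₂ := by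
      rw [hκ₂]; infer_instance
    infer_instance
  haveI : (ae (κ₁ r)).NeBot := ae_neBot.2 (IsProbabilityMeasure.ne_zero _)
  haveI : (ae (κ₂ r)).NeBot := ae_neBot.2 (IsProbabilityMeasure.ne_zero _)
  obtain ⟨x, hx⟩ := hr1.exists
  obtain ⟨y, hy⟩ := hr2.exists
  exact ⟨x, y, hx.1, hy.1, by rw [hx.2, hy.2]⟩

end Select

end Recon

/- (Reconstruction theorem.) Two complete separable metric spaces with nondegenerate
(full-support) Borel probability measures have equal matrix distributions if and only if
there is a measure-preserving isometric bijection between them. -/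
open Recon in
set_option maxHeartbeats 1000000 in
/-- (Reconstruction theorem.) Two complete separable metric spaces with nondegenerate
(full-support) Borel probability measures have equal matrix distributions if and only if
there is a measure-preserving isometric bijection between them. -/
theorem reconstruction_theorem
    (X₁ : Type) [MetricSpace X₁] [CompleteSpace X₁] [SeparableSpace X₁]
    [MeasurableSpace X₁] [BorelSpace X₁]
    (X₂ : Type) [MetricSpace X₂] [CompleteSpace X₂] [SeparableSpace X₂]
    [MeasurableSpace X₂] [BorelSpace X₂]
    (μ₁ : Measure X₁) [IsProbabilityMeasure μ₁]
    (μ₂ : Measure X₂) [IsProbabilityMeasure μ₂]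
    (h₁ : ∀ O : Set X₁, IsOpen O → O.Nonempty → 0 < μ₁ O)
    (h₂ : ∀ O : Set X₂, IsOpen O → O.Nonempty → 0 < μ₂ O)
    (P₁ : Measure (ℕ → X₁)) (hP₁ : IsIIDProduct μ₁ P₁)
    (P₂ : Measure (ℕ → X₂)) (hP₂ : IsIIDProduct μ₂ P₂) :
    Measure.map (distFun X₁) P₁ = Measure.map (distFun X₂) P₂ ↔
      ∃ V : X₁ → X₂, Function.Bijective V ∧
        (∀ x y : X₁, dist (V x) (V y) = dist x y) ∧
        Measure.map V μ₁ = μ₂ := by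
  haveI := hP₁.1
  haveI := hP₂.1
  constructor
  · -- hard direction
    intro hD
    obtain ⟨G₁, hG₁m, hG₁1, hG₁P⟩ := good_set hP₁ h₁
    obtain ⟨G₂, hG₂m, hG₂1, hG₂P⟩ := good_set hP₂ h₂
    obtain ⟨x, y, hxG, hyG, hxy⟩ := common_matrix P₁ P₂ hD G₁ hG₁m hG₁1 G₂ hG₂m hG₂1
    obtain ⟨hxdo, hxT⟩ := hG₁P x hxG
    obtain ⟨hydo, hyT⟩ := hG₂P y hyG
    have hdr : ∀ i j, dist (x i) (x j) = dist (y i) (y j) := fun i j =>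
      congrFun (congrFun hxy i) j
    have hxdense : DenseRange x := by
      have hsub : Set.range (fun i => x (2 * i + 1)) ⊆ Set.range x := by
        rintro _ ⟨i, rfl⟩; exact ⟨2 * i + 1, rfl⟩
      exact Dense.mono hsub hxdo
    have hydense : DenseRange y := by
      have hsub : Set.range (fun i => y (2 * i + 1)) ⊆ Set.range y := by
        rintro _ ⟨i, rfl⟩; exact ⟨2 * i + 1, rfl⟩
      exact Dense.mono hsub hydo
    obtain ⟨V, hVbij, hVdist, hVx⟩ := extend_isometry x y hxdense hydense hdr
    have hVm : Measurable V := (Isometry.of_dist_eq hVdist).continuous.measurable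
    refine ⟨V, hVbij, hVdist, ?_⟩
    haveI : IsProbabilityMeasure (Measure.map V μ₁) :=
      Measure.isProbabilityMeasure_map hVm.aemeasurable
    refine measure_eq_of_fam (Measure.map V μ₁) μ₂ (fun i => y (2 * i + 1)) hydo fun K => ?_
    -- the two real integrals agree via the common SLLN limits
    have hc₂ : (fun i => y (2 * i + 1)) = fun i => V (x (2 * i + 1)) :=
      funext fun i => (hVx (2 * i + 1)).symm
    have hseq : (fun n : ℕ => (n : ℝ)⁻¹ • ∑ k ∈ Finset.range n,
          ((fam K (fun i => y (2 * i + 1)) (y (2 * k)) : ℝ)))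
        = fun n : ℕ => (n : ℝ)⁻¹ • ∑ k ∈ Finset.range n,
          ((fam K (fun i => x (2 * i + 1)) (x (2 * k)) : ℝ)) := by
      funext n
      congr 1
      refine Finset.sum_congr rfl fun k _ => ?_
      have h1 : y (2 * k) = V (x (2 * k)) := (hVx (2 * k)).symm
      rw [h1, hc₂, fam_map hVdist]
    have hIeq : (∫ z, ((fam K (fun i => y (2 * i + 1)) z : ℝ)) ∂μ₂)
        = ∫ z, ((fam K (fun i => x (2 * i + 1)) z : ℝ)) ∂μ₁ := by
      refine tendsto_nhds_unique ?_ (hxT K)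
      have := hyT K
      rwa [hseq] at this
    have hcont2 : Continuous fun z : X₂ => ((fam K (fun i => y (2 * i + 1)) z : ℝ)) :=
      continuous_fam_comp continuous_const continuous_id'
    have hInu : (∫ z, ((fam K (fun i => y (2 * i + 1)) z : ℝ)) ∂(Measure.map V μ₁))
        = ∫ z, ((fam K (fun i => x (2 * i + 1)) z : ℝ)) ∂μ₁ := by
      rw [integral_map hVm.aemeasurable (hcont2.aestronglyMeasurable)]
      have : (fun w => ((fam K (fun i => y (2 * i + 1)) (V w) : ℝ)))
          = fun w => ((fam K (fun i => x (2 * i + 1)) w : ℝ)) := by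
        funext w
        rw [hc₂, fam_map hVdist]
      rw [this]
    -- convert to lintegrals
    have hlint : ∀ (m : Measure X₂) [IsProbabilityMeasure m],
        ∫⁻ z, ((fam K (fun i => y (2 * i + 1)) z : ℝ≥0∞)) ∂m
          = ENNReal.ofReal (∫ z, ((fam K (fun i => y (2 * i + 1)) z : ℝ)) ∂m) := by
      intro m _
      rw [ofReal_integral_eq_lintegral_ofReal]
      · refine lintegral_congr fun z => ?_
        rw [ENNReal.ofReal_coe_nnreal]
      · refine Integrable.mono' (integrable_const 1)
          (continuous_fam_comp continuous_const continuous_id' :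
            Continuous fun z : X₂ => ((fam K (fun i => y (2 * i + 1)) z : ℝ))).aestronglyMeasurable ?_
        refine Filter.Eventually.of_forall fun z => ?_
        rw [Real.norm_eq_abs, abs_of_nonneg (by positivity)]
        exact_mod_cast fam_le_one
      · exact Filter.Eventually.of_forall fun z => by positivity
    rw [hlint (Measure.map V μ₁), hlint μ₂, hInu, hIeq]
  · -- easy direction
    rintro ⟨V, hVbij, hVdist, hVmap⟩
    have hVm : Measurable V := (Isometry.of_dist_eq hVdist).continuous.measurable
    set W : (ℕ → X₁) → (ℕ → X₂) := fun x k => V (x k) with hW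
    have hWm : Measurable W := measurable_pi_lambda _ fun k => hVm.comp (measurable_pi_apply k)
    have hWiid : IsIIDProduct μ₂ (Measure.map W P₁) := by
      refine ⟨Measure.isProbabilityMeasure_map hWm.aemeasurable, ?_⟩
      intro n s hs
      rw [Measure.map_apply hWm (measurableSet_of_mem_boxes ⟨n, s, hs, rfl⟩)]
      have hpre : W ⁻¹' {w : ℕ → X₂ | ∀ i : Fin n, w (i : ℕ) ∈ s i}
          = {x : ℕ → X₁ | ∀ i : Fin n, x (i : ℕ) ∈ V ⁻¹' (s i)} := rfl
      rw [hpre, hP₁.2 n (fun i => V ⁻¹' (s i)) (fun i => hVm (hs i))]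
      refine Finset.prod_congr rfl fun i _ => ?_
      rw [← hVmap, Measure.map_apply hVm (hs i)]
    have hPeq : Measure.map W P₁ = P₂ := iid_unique hWiid hP₂
    rw [← hPeq, Measure.map_map (continuous_distFun X₂).measurable hWm]
    have : distFun X₂ ∘ W = distFun X₁ := by
      funext x
      funext i j
      exact hVdist (x i) (x j)
    rw [this]
end

section
/- (Erdős–Rényi.) Fix 0 < p < 1 and consider the product Bernoulli measure on the space of functions e : {(i,j) ∈ ℕ × ℕ : i < j} → Bool, where each coordinate independently equals true with probability p. Then almost every e is universal in the following sense: for every n and every word w : Fin n → Bool there exists k ≥ n such that e(i, k) = w i for all i < n. (Equivalently, the adjacency matrix of the random graph is universal with probability one, so the random graph is isomorphic to the universal Rado graph almost surely.) -/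
open MeasureTheory

/-- The index set of above-diagonal entries: pairs `(i, j)` with `i < j`. -/
abbrev EdgeIdx : Type := {q : ℕ × ℕ // q.1 < q.2}

/-- `P` is the product Bernoulli measure with parameter `p` on `EdgeIdx → Bool`: each
coordinate is independently `true` with probability `p` and `false` with probability
`1 - p`. -/
def IsBernoulliProduct (p : ℝ) (P : Measure (EdgeIdx → Bool)) : Prop :=
  IsProbabilityMeasure P ∧
  ∀ (S : Finset EdgeIdx) (f : EdgeIdx → Bool),
    P {e | ∀ i ∈ S, e i = f i} = ∏ i ∈ S, ENNReal.ofReal (if f i then p else 1 - p)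

/-- Universality of an adjacency matrix: every finite word `w` of length `n` occurs as
the beginning of the `k`-th column for some `k ≥ n`. -/
def UniversalAdj (e : EdgeIdx → Bool) : Prop :=
  ∀ (n : ℕ) (w : Fin n → Bool), ∃ k : ℕ, ∃ hk : n ≤ k,
    ∀ i : Fin n, e ⟨((i : ℕ), k), lt_of_lt_of_le i.isLt hk⟩ = w i

namespace ErdosRenyiAux

noncomputable def wt (p : ℝ) (b : Bool) : ENNReal := ENNReal.ofReal (if b then p else 1 - p)

def Cyl (S : Finset EdgeIdx) (f : EdgeIdx → Bool) : Set (EdgeIdx → Bool) := {e | ∀ i ∈ S, e i = f i}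

lemma P_cyl {p : ℝ} {P : Measure (EdgeIdx → Bool)} (hP : IsBernoulliProduct p P)
    (S : Finset EdgeIdx) (f : EdgeIdx → Bool) :
    P (Cyl S f) = ∏ i ∈ S, wt p (f i) := hP.2 S f

lemma measurableSet_cyl (S : Finset EdgeIdx) (f : EdgeIdx → Bool) :
    MeasurableSet (Cyl S f) := by
  have : Cyl S f = ⋂ i ∈ (S : Set EdgeIdx), (fun e : EdgeIdx → Bool => e i) ⁻¹' {f i} := by
    ext e; simp [Cyl]
  rw [this]
  exact MeasurableSet.biInter S.countable_toSet
    (fun i _ => (measurable_pi_apply i) (measurableSet_singleton _))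

def extFn (S : Finset EdgeIdx) (g : EdgeIdx → Bool) (h : S → Bool) : EdgeIdx → Bool :=
  fun i => if hi : i ∈ S then h ⟨i, hi⟩ else g i

lemma extFn_mem (S : Finset EdgeIdx) (g : EdgeIdx → Bool) (h : S → Bool) {i : EdgeIdx}
    (hi : i ∈ S) : extFn S g h i = h ⟨i, hi⟩ := dif_pos hi

lemma extFn_not_mem (S : Finset EdgeIdx) (g : EdgeIdx → Bool) (h : S → Bool) {i : EdgeIdx}
    (hi : i ∉ S) : extFn S g h i = g i := dif_neg hi

lemma split {p : ℝ} {P : Measure (EdgeIdx → Bool)} (hP : IsBernoulliProduct p P)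
    {S T : Finset EdgeIdx} (hST : Disjoint S T) {B : Set (EdgeIdx → Bool)}
    (hB : ∀ e e' : EdgeIdx → Bool, (∀ i ∈ S, e i = e' i) → e ∈ B → e' ∈ B)
    (g : EdgeIdx → Bool) :
    P (B ∩ Cyl T g) = P B * ∏ i ∈ T, wt p (g i) := by
  classical
  set A : Finset (S → Bool) := Finset.univ.filter (fun h => extFn S g h ∈ B) with hA
  have hBU : B = ⋃ h ∈ A, Cyl S (extFn S g h) := by
    ext e
    constructor
    · intro he
      refine Set.mem_iUnion₂.2 ⟨fun i : S => e i, ?_, ?_⟩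
      · simp only [hA, Finset.mem_filter, Finset.mem_univ, true_and]
        exact hB e _ (fun i hi => (extFn_mem S g (fun i : S => e i.1) hi).symm) he
      · intro i hi; exact (extFn_mem S g (fun i : S => e i.1) hi).symm
    · intro he
      obtain ⟨h, hh, he⟩ := Set.mem_iUnion₂.1 he
      simp only [hA, Finset.mem_filter, Finset.mem_univ, true_and] at hh
      exact hB (extFn S g h) e (fun i hi => (he i hi).symm) hh
  have hInt : ∀ h : S → Bool, Cyl S (extFn S g h) ∩ Cyl T g = Cyl (S ∪ T) (extFn S g h) := by
    intro h
    ext e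
    simp only [Cyl, Set.mem_inter_iff, Set.mem_setOf_eq, Finset.mem_union]
    constructor
    · rintro ⟨h1, h2⟩ i hi
      rcases hi with hi | hi
      · exact h1 i hi
      · rw [h2 i hi, extFn_not_mem S g h (fun hiS => (Finset.disjoint_left.1 hST) hiS hi)]
    · intro h1
      refine ⟨fun i hi => h1 i (Or.inl hi), fun i hi => ?_⟩
      rw [h1 i (Or.inr hi),
        extFn_not_mem S g h (fun hiS => (Finset.disjoint_left.1 hST) hiS hi)]
  have hdisjS : (↑A : Set (S → Bool)).PairwiseDisjoint (fun h => Cyl S (extFn S g h)) := by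
    intro h1 _ h2 _ hne
    refine Set.disjoint_left.2 fun e he1 he2 => hne ?_
    funext i
    have e1 := he1 i.1 i.2
    have e2 := he2 i.1 i.2
    rw [extFn_mem S g h1 i.2] at e1
    rw [extFn_mem S g h2 i.2] at e2
    rw [← e1, ← e2]
  have hdisj : (↑A : Set (S → Bool)).PairwiseDisjoint
      (fun h => Cyl (S ∪ T) (extFn S g h)) := by
    refine Set.PairwiseDisjoint.mono hdisjS ?_
    intro h
    intro e he
    exact fun i hi => he i (Finset.mem_union_left T hi)
  calc P (B ∩ Cyl T g) = P (⋃ h ∈ A, Cyl (S ∪ T) (extFn S g h)) := by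
        rw [hBU, Set.iUnion₂_inter]
        simp_rw [hInt]
    _ = ∑ h ∈ A, P (Cyl (S ∪ T) (extFn S g h)) :=
        measure_biUnion_finset hdisj (fun h _ => measurableSet_cyl _ _)
    _ = ∑ h ∈ A, (∏ i ∈ S, wt p (extFn S g h i)) * ∏ i ∈ T, wt p (extFn S g h i) := by
        simp_rw [P_cyl hP, Finset.prod_union hST]
    _ = (∑ h ∈ A, ∏ i ∈ S, wt p (extFn S g h i)) * ∏ i ∈ T, wt p (g i) := by
        rw [Finset.sum_mul]
        refine Finset.sum_congr rfl fun h _ => ?_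
        congr 1
        refine Finset.prod_congr rfl fun i hi => ?_
        rw [extFn_not_mem S g h (fun hiS => (Finset.disjoint_left.1 hST) hiS hi)]
    _ = P B * ∏ i ∈ T, wt p (g i) := by
        congr 1
        rw [hBU, measure_biUnion_finset hdisjS (fun h _ => measurableSet_cyl _ _)]
        exact Finset.sum_congr rfl fun h _ => (P_cyl hP _ _).symm


def col (n j : ℕ) : Finset EdgeIdx :=
  Finset.univ.image (fun i : Fin n =>
    (⟨((i : ℕ), n + j), lt_of_lt_of_le i.isLt (Nat.le_add_right n j)⟩ : EdgeIdx))

lemma snd_of_mem_col {n j : ℕ} {q : EdgeIdx} (hq : q ∈ col n j) : q.1.2 = n + j := by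
  simp only [col, Finset.mem_image, Finset.mem_univ, true_and] at hq
  obtain ⟨i, rfl⟩ := hq
  rfl

noncomputable def gfun (n : ℕ) (w : Fin n → Bool) : EdgeIdx → Bool :=
  fun q => if h : q.1.1 < n then w ⟨q.1.1, h⟩ else false

lemma prod_col {p : ℝ} (n j : ℕ) (w : Fin n → Bool) :
    ∏ q ∈ col n j, wt p (gfun n w q) = ∏ i : Fin n, wt p (w i) := by
  rw [col, Finset.prod_image]
  · refine Finset.prod_congr rfl fun i _ => ?_
    congr 1
    simp only [gfun]
    rw [dif_pos i.isLt]
  · intro a _ b _ hab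
    have : (a : ℕ) = b := congrArg (fun q : EdgeIdx => q.1.1) hab
    exact Fin.ext this

def Sm (n m : ℕ) : Finset EdgeIdx := (Finset.range m).biUnion (col n)

lemma disj_Sm_col (n m : ℕ) : Disjoint (Sm n m) (col n m) := by
  rw [Finset.disjoint_left]
  intro q hq hq'
  simp only [Sm, Finset.mem_biUnion, Finset.mem_range] at hq
  obtain ⟨j, hj, hqj⟩ := hq
  have h1 := snd_of_mem_col hqj
  have h2 := snd_of_mem_col hq'
  omega

def Bset (n : ℕ) (w : Fin n → Bool) (m : ℕ) : Set (EdgeIdx → Bool) :=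
  {e | ∀ j < m, ∃ i : Fin n,
    e ⟨((i : ℕ), n + j), lt_of_lt_of_le i.isLt (Nat.le_add_right n j)⟩ ≠ w i}

lemma mem_Sm (n : ℕ) {j : ℕ} {m : ℕ} (hj : j < m) (i : Fin n) :
    (⟨((i : ℕ), n + j), lt_of_lt_of_le i.isLt (Nat.le_add_right n j)⟩ : EdgeIdx) ∈ Sm n m := by
  simp only [Sm, Finset.mem_biUnion, Finset.mem_range]
  exact ⟨j, hj, Finset.mem_image.2 ⟨i, Finset.mem_univ i, rfl⟩⟩

lemma Bset_determined (n : ℕ) (w : Fin n → Bool) (m : ℕ) :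
    ∀ e e' : EdgeIdx → Bool, (∀ i ∈ Sm n m, e i = e' i) → e ∈ Bset n w m → e' ∈ Bset n w m := by
  intro e e' hag he j hj
  obtain ⟨i, hi⟩ := he j hj
  exact ⟨i, by rw [← hag _ (mem_Sm n hj i)]; exact hi⟩

lemma Bset_succ (n : ℕ) (w : Fin n → Bool) (m : ℕ) :
    Bset n w (m + 1) = Bset n w m \ Cyl (col n m) (gfun n w) := by
  ext e
  simp only [Bset, Set.mem_diff, Set.mem_setOf_eq, Cyl]
  constructor
  · intro h
    refine ⟨fun j hj => h j (by omega), ?_⟩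
    intro hc
    obtain ⟨i, hi⟩ := h m (by omega)
    apply hi
    rw [hc _ (Finset.mem_image.2 ⟨i, Finset.mem_univ i, rfl⟩)]
    simp only [gfun]
    rw [dif_pos i.isLt]
  · rintro ⟨h1, h2⟩ j hj
    rcases Nat.lt_succ_iff_lt_or_eq.1 hj with hj' | rfl
    · exact h1 j hj'
    · by_contra hc
      push_neg at hc
      apply h2
      intro q hq
      simp only [col, Finset.mem_image, Finset.mem_univ, true_and] at hq
      obtain ⟨i, rfl⟩ := hq
      rw [hc i]
      simp only [gfun]
      rw [dif_pos i.isLt]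

lemma Bset_bound {p : ℝ} (hp0 : 0 < p) (hp1 : p < 1)
    {P : Measure (EdgeIdx → Bool)} (hP : IsBernoulliProduct p P)
    (n : ℕ) (w : Fin n → Bool) (m : ℕ) :
    P (Bset n w m) ≤ (1 - ∏ i : Fin n, wt p (w i)) ^ m := by
  haveI := hP.1
  set q : ENNReal := ∏ i : Fin n, wt p (w i) with hq
  have hq1 : q ≤ 1 := by
    refine Finset.prod_le_one (fun i _ => zero_le) (fun i _ => ?_)
    simp only [wt]
    split <;> exact ENNReal.ofReal_le_one.2 (by linarith)
  induction m with
  | zero => simpa using prob_le_one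
  | succ m ih =>
    have key := measure_inter_add_diff (μ := P) (Bset n w m) (measurableSet_cyl (col n m) (gfun n w))
    have hsplit := split hP (disj_Sm_col n m) (Bset_determined n w m) (gfun n w)
    rw [prod_col n m w, ← hq] at hsplit
    rw [Bset_succ]
    have hfin : q * P (Bset n w m) ≠ ⊤ :=
      ENNReal.mul_ne_top (ne_top_of_le_ne_top ENNReal.one_ne_top hq1) (measure_ne_top P _)
    have heq : P (Bset n w m \ Cyl (col n m) (gfun n w)) = (1 - q) * P (Bset n w m) := by
      have h2 : (1 - q) * P (Bset n w m) + q * P (Bset n w m) = P (Bset n w m) := by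
        rw [← add_mul, tsub_add_cancel_of_le hq1, one_mul]
      have h3 : P (Bset n w m \ Cyl (col n m) (gfun n w)) + q * P (Bset n w m)
          = (1 - q) * P (Bset n w m) + q * P (Bset n w m) := by
        calc P (Bset n w m \ Cyl (col n m) (gfun n w)) + q * P (Bset n w m)
            = P (Bset n w m ∩ Cyl (col n m) (gfun n w))
              + P (Bset n w m \ Cyl (col n m) (gfun n w)) := by
              rw [hsplit, mul_comm]; exact add_comm _ _
          _ = P (Bset n w m) := key
          _ = (1 - q) * P (Bset n w m) + q * P (Bset n w m) := h2.symm
      exact WithTop.add_right_cancel hfin h3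
    rw [heq, pow_succ, mul_comm ((1-q)^m)]
    exact mul_le_mul_right ih _


def FullFail (n : ℕ) (w : Fin n → Bool) : Set (EdgeIdx → Bool) :=
  {e | ∀ (k : ℕ) (hk : n ≤ k),
    ∃ i : Fin n, e ⟨((i : ℕ), k), lt_of_lt_of_le i.isLt hk⟩ ≠ w i}

lemma FullFail_subset (n : ℕ) (w : Fin n → Bool) (m : ℕ) : FullFail n w ⊆ Bset n w m :=
  fun e he j _ => he (n + j) (Nat.le_add_right n j)

lemma FullFail_null {p : ℝ} (hp0 : 0 < p) (hp1 : p < 1)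
    {P : Measure (EdgeIdx → Bool)} (hP : IsBernoulliProduct p P)
    (n : ℕ) (w : Fin n → Bool) : P (FullFail n w) = 0 := by
  set q : ENNReal := ∏ i : Fin n, wt p (w i) with hqdef
  have hq0 : q ≠ 0 := by
    rw [hqdef, Finset.prod_ne_zero_iff]
    intro i _
    simp only [wt]
    split
    · exact (ENNReal.ofReal_pos.2 hp0).ne'
    · exact (ENNReal.ofReal_pos.2 (by linarith)).ne'
  have hr : (1 : ENNReal) - q < 1 := ENNReal.sub_lt_self ENNReal.one_ne_top one_ne_zero hq0
  have htend : Filter.Tendsto (fun m : ℕ => ((1 : ENNReal) - q) ^ m)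
      Filter.atTop (nhds 0) := ENNReal.tendsto_pow_atTop_nhds_zero_of_lt_one hr
  have hle : ∀ m : ℕ, P (FullFail n w) ≤ (1 - q) ^ m := fun m =>
    le_trans (measure_mono (FullFail_subset n w m)) (Bset_bound hp0 hp1 hP n w m)
  exact le_antisymm (ge_of_tendsto' htend hle) zero_le

end ErdosRenyiAux

/-- (Erdős–Rényi.) For `0 < p < 1`, with respect to the product Bernoulli(`p`) measure,
almost every adjacency matrix is universal: the random graph is isomorphic to the
universal Rado graph almost surely. -/
theorem erdos_renyi_random_graph_universal (p : ℝ) (hp0 : 0 < p) (hp1 : p < 1)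
    (P : Measure (EdgeIdx → Bool)) (hP : IsBernoulliProduct p P) :
    P {e | UniversalAdj e} = 1 := by
  haveI := hP.1
  have hsub : {e | UniversalAdj e}ᶜ ⊆
      ⋃ n : ℕ, ⋃ w : Fin n → Bool, ErdosRenyiAux.FullFail n w := by
    intro e he
    simp only [Set.mem_compl_iff, Set.mem_setOf_eq, UniversalAdj] at he
    push_neg at he
    obtain ⟨n, w, hw⟩ := he
    exact Set.mem_iUnion.2 ⟨n, Set.mem_iUnion.2 ⟨w, hw⟩⟩
  have hnull : P ({e | UniversalAdj e}ᶜ) = 0 :=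
    measure_mono_null hsub (measure_iUnion_null fun n =>
      measure_iUnion_null fun w => ErdosRenyiAux.FullFail_null hp0 hp1 hP n w)
  refine le_antisymm prob_le_one ?_
  calc (1 : ENNReal) = P Set.univ := measure_univ.symm
    _ = P ({e | UniversalAdj e} ∪ {e | UniversalAdj e}ᶜ) := by rw [Set.union_compl_self]
    _ ≤ P {e | UniversalAdj e} + P ({e | UniversalAdj e}ᶜ) := measure_union_le _ _
    _ = P {e | UniversalAdj e} := by rw [hnull, add_zero]
end

section
/- There is no universal separable ultrametric space: there does not exist a complete separable metric space U whose metric satisfies the ultrametric inequality dist x z ≤ max (dist x y) (dist y z) for all x, y, z, such that every complete separable metric space whose metric satisfies the ultrametric inequality admits an isometric embedding into U. -/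
open TopologicalSpace

/-- A two-point type without pre-existing topological instances. -/
def TwoPts : Type := Bool

instance : DecidableEq TwoPts := fun a b => instDecidableEqBool a b
instance : Finite TwoPts := Bool.instFinite
instance : Countable TwoPts := Finite.to_countable

def TwoPts.a : TwoPts := true
def TwoPts.b : TwoPts := false

theorem TwoPts.a_ne_b : TwoPts.a ≠ TwoPts.b := by decide

/-- Two-point metric space with distance `r`. -/
def twoPtsMetric (r : ℝ) (hr : 0 < r) : MetricSpace TwoPts where
  dist x y := if x = y then 0 else r
  dist_self x := by simp
  dist_comm x y := by by_cases h : x = y <;> simp [h, eq_comm]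
  dist_triangle x y z := by
    by_cases hxz : x = z
    · simp only [hxz, if_pos rfl]
      positivity
    · by_cases hxy : x = y
      · subst hxy; simp [hxz]
      · have : (0:ℝ) ≤ if y = z then 0 else r := by positivity
        simp only [if_neg hxz, if_neg hxy]
        linarith
  eq_of_dist_eq_zero := by
    intro x y h
    by_contra hxy
    simp [hxy] at h
    exact hr.ne' h

/-- There is no universal separable ultrametric space: no complete separable metric space
`U` whose metric is an ultrametric can isometrically contain every complete separable
ultrametric space. -/
theorem no_universal_ultrametric_space :
    ∀ (U : Type) [MetricSpace U], CompleteSpace U → SeparableSpace U →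
      (∀ x y z : U, dist x z ≤ max (dist x y) (dist y z)) →
      ¬ (∀ (X : Type) [MetricSpace X], CompleteSpace X → SeparableSpace X →
          (∀ x y z : X, dist x z ≤ max (dist x y) (dist y z)) →
          ∃ f : X → U, Isometry f) := by
  intro U _ _ _ hU hall
  obtain ⟨S, hSc, hSd⟩ := exists_countable_dense U
  have key : Set.Ioi (0:ℝ) ⊆ Set.image2 dist S S := by
    intro r hrmem
    have hr : (0:ℝ) < r := hrmem
    letI : MetricSpace TwoPts := twoPtsMetric r hr
    have hdist : ∀ p q : TwoPts, dist p q = if p = q then 0 else r := fun _ _ => rfl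
    haveI : CompactSpace TwoPts := Finite.compactSpace
    have hcs : CompleteSpace TwoPts := complete_of_compact
    have hsep : SeparableSpace TwoPts := Countable.to_separableSpace
    have hultra : ∀ x y z : TwoPts, dist x z ≤ max (dist x y) (dist y z) := by
      intro x y z
      by_cases hxz : x = z
      · rw [hdist, if_pos hxz]
        exact le_max_of_le_left dist_nonneg
      · rw [hdist x z, if_neg hxz]
        by_cases hxy : x = y
        · subst hxy
          exact le_max_of_le_right (by rw [hdist, if_neg hxz])
        · exact le_max_of_le_left (by rw [hdist, if_neg hxy])
    obtain ⟨f, hf⟩ := hall TwoPts hcs hsep hultra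
    set u := f TwoPts.a
    set v := f TwoPts.b
    have huv : dist u v = r := by
      rw [hf.dist_eq, hdist, if_neg TwoPts.a_ne_b]
    obtain ⟨s, hsS, hs⟩ : ∃ s ∈ S, dist u s < r := by
      obtain ⟨s, hs1, hs2⟩ := (Metric.dense_iff.1 hSd) u r hr
      exact ⟨s, hs2, by rw [dist_comm]; exact Metric.mem_ball.1 hs1⟩
    obtain ⟨t, htS, ht⟩ : ∃ t ∈ S, dist v t < r := by
      obtain ⟨t, ht1, ht2⟩ := (Metric.dense_iff.1 hSd) v r hr
      exact ⟨t, ht2, by rw [dist_comm]; exact Metric.mem_ball.1 ht1⟩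
    have hut : dist u t ≤ r := by
      calc dist u t ≤ max (dist u v) (dist v t) := hU u v t
        _ ≤ r := max_le huv.le ht.le
    have hle : dist s t ≤ r := by
      calc dist s t ≤ max (dist s u) (dist u t) := hU s u t
        _ ≤ r := max_le (by rw [dist_comm]; exact hs.le) hut
    have hge : r ≤ dist s t := by
      by_contra h
      push_neg at h
      have h1 : dist u v ≤ max (dist u s) (dist s v) := hU u s v
      have h2 : dist s v ≤ max (dist s t) (dist t v) := hU s t v
      have h3 : dist s v < r := lt_of_le_of_lt h2 (max_lt h (by rw [dist_comm]; exact ht))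
      have : dist u v < r := lt_of_le_of_lt h1 (max_lt hs h3)
      exact absurd huv this.ne
    exact ⟨s, hsS, t, htS, le_antisymm hle hge⟩
  have hcount : (Set.Ioi (0:ℝ)).Countable :=
    Set.Countable.mono key (Set.Countable.image2 hSc hSc _)
  have huniv : (Set.univ : Set ℝ).Countable := by
    have hpre := hcount.preimage Real.exp_injective
    exact hpre.mono (fun x _ => Real.exp_pos x)
  exact Cardinal.not_countable_real huniv
end
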